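/- arXiv:2305.04495 — 11 statements merged into one kernel-verified Lean document; each statement's English description precedes it below -/
import Mathlib

section
/- Let A, B ∈ ℝ^{n×n} with A invertible. If the spectral radius ρ(|A⁻¹B|) < 1, then for every F ∈ ℝ^{n×n} the generalized absolute value matrix equation AX + B|X| = F has exactly one solution X ∈ ℝ^{n×n}. -/
/-!
Writing `C = A⁻¹B`, the equation is equivalent to `X = A⁻¹F - C|X|`. The map
`T X = A⁻¹F - C|X|` satisfies `|T X - T Y| ≤ |C| |X - Y|` entrywise, hence
`|Tᵏ X - Tᵏ Y| ≤ |C|ᵏ |X - Y|`. Since `ρ(|C|) < 1`, Gelfand's formula gives some `k` with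
`‖|C|ᵏ‖∞ < 1`, so `Tᵏ` is a contraction for the `∞`-operator norm and Banach's fixed point theorem
yields a unique fixed point of `T`.
-/

open Matrix

/-- Componentwise absolute value of a real matrix. -/
noncomputable def matAbs {n : ℕ} (M : Matrix (Fin n) (Fin n) ℝ) : Matrix (Fin n) (Fin n) ℝ :=
  fun i j => |M i j|

/-- Spectral radius of a real square matrix: the supremum of |λ| over its complex
eigenvalues (the complex spectrum of the matrix viewed over ℂ). -/
noncomputable def specRad {m : Type*} [Fintype m] [DecidableEq m]
    (M : Matrix m m ℝ) : ℝ :=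
  sSup ((fun z : ℂ => ‖z‖) '' spectrum ℂ (M.map Complex.ofReal))

open scoped NNReal ENNReal
open Filter Function

attribute [local instance] Matrix.linftyOpNormedAddCommGroup Matrix.linftyOpNormedRing
  Matrix.linftyOpNormedAlgebra

theorem exists_pow_nnnorm_lt_one_of_spectralRadius_lt_one {A : Type*} [NormedRing A]
    [NormedAlgebra ℂ A] [CompleteSpace A] {a : A} (ha : spectralRadius ℂ a < 1) :
    ∃ k : ℕ, ‖a ^ k‖₊ < 1 := by
  obtain ⟨N, hN⟩ := eventually_atTop.mp
    ((spectrum.pow_nnnorm_pow_one_div_tendsto_nhds_spectralRadius a).eventually_lt_const ha)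
  have hlt := hN (N + 1) N.le_succ
  rw [one_div, ENNReal.rpow_inv_lt_iff (by positivity), ENNReal.one_rpow] at hlt
  exact ⟨N + 1, mod_cast hlt⟩

theorem ContractingWith.existsUnique_isFixedPt_of_iterate {α : Type*} [MetricSpace α]
    [Nonempty α] [CompleteSpace α] {K : ℝ≥0} {f : α → α} {k : ℕ}
    (hf : ContractingWith K f^[k]) : ∃! x, IsFixedPt f x :=
  ⟨_, hf.isFixedPt_fixedPoint_iterate, fun _ hy =>
    hf.fixedPoint_unique' (hy.iterate k) hf.fixedPoint_isFixedPt⟩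

theorem spectralRadius_map_ofReal_le_specRad {m : Type*} [Fintype m] [DecidableEq m]
    (M : Matrix m m ℝ) :
    spectralRadius ℂ (M.map Complex.ofReal) ≤ ENNReal.ofReal (specRad M) := by
  have hbdd : BddAbove ((fun z : ℂ => ‖z‖) '' spectrum ℂ (M.map Complex.ofReal)) :=
    ((Matrix.finite_spectrum _).image _).bddAbove
  refine iSup₂_le fun z hz => ?_
  rw [← ENNReal.ofReal_coe_nnreal, coe_nnnorm]
  exact ENNReal.ofReal_le_ofReal (le_csSup hbdd ⟨z, hz, rfl⟩)

section LinftyOpNorm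

variable {m n : Type*} [Fintype m] [Fintype n]

theorem linfty_opNNNorm_map_ofReal (P : Matrix m n ℝ) : ‖P.map Complex.ofReal‖₊ = ‖P‖₊ := by
  simp only [Matrix.linfty_opNNNorm_def, Matrix.map_apply, Complex.nnnorm_real]

theorem linfty_opNNNorm_le_of_abs_le {P Q : Matrix m n ℝ} (h : ∀ i j, |P i j| ≤ Q i j) :
    ‖P‖₊ ≤ ‖Q‖₊ := by
  simp only [Matrix.linfty_opNNNorm_def]
  gcongr with i _ j
  rw [← NNReal.coe_le_coe, coe_nnnorm, coe_nnnorm, Real.norm_eq_abs, Real.norm_eq_abs,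
    abs_of_nonneg ((abs_nonneg _).trans (h i j))]
  exact h i j

theorem exists_pow_linfty_opNNNorm_lt_one_of_specRad_lt_one {M : Matrix m m ℝ} [DecidableEq m]
    (hM : specRad M < 1) : ∃ k : ℕ, ‖M ^ k‖₊ < 1 := by
  obtain ⟨k, hk⟩ := exists_pow_nnnorm_lt_one_of_spectralRadius_lt_one
    ((spectralRadius_map_ofReal_le_specRad M).trans_lt (ENNReal.ofReal_lt_one.mpr hM))
  have hmap : (M ^ k).map Complex.ofReal = M.map Complex.ofReal ^ k :=
    map_pow Complex.ofRealHom.mapMatrix M k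
  refine ⟨k, ?_⟩
  rwa [← hmap, linfty_opNNNorm_map_ofReal] at hk

end LinftyOpNorm

section GAVME

variable {n : ℕ}

theorem linfty_opNNNorm_matAbs (X : Matrix (Fin n) (Fin n) ℝ) : ‖matAbs X‖₊ = ‖X‖₊ := by
  simp only [Matrix.linfty_opNNNorm_def, matAbs, Real.nnnorm_abs]

theorem abs_mul_apply_le_of_abs_le (C : Matrix (Fin n) (Fin n) ℝ) {D E : Matrix (Fin n) (Fin n) ℝ}
    (h : ∀ i j, |D i j| ≤ E i j) (i j : Fin n) : |(C * D) i j| ≤ (matAbs C * E) i j := by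
  simp only [Matrix.mul_apply]
  refine (Finset.abs_sum_le_sum_abs _ _).trans (Finset.sum_le_sum fun l _ => ?_)
  rw [abs_mul]
  exact mul_le_mul_of_nonneg_left (h l j) (abs_nonneg _)

noncomputable def gavmeMap (C G : Matrix (Fin n) (Fin n) ℝ) (X : Matrix (Fin n) (Fin n) ℝ) :
    Matrix (Fin n) (Fin n) ℝ :=
  G - C * matAbs X

theorem gavmeMap_sub_gavmeMap (C G X Y : Matrix (Fin n) (Fin n) ℝ) :
    gavmeMap C G X - gavmeMap C G Y = C * (matAbs Y - matAbs X) := by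
  simp only [gavmeMap, sub_sub_sub_cancel_left, Matrix.mul_sub]

theorem abs_iterate_gavmeMap_sub_le (C G : Matrix (Fin n) (Fin n) ℝ) (k : ℕ)
    (X Y : Matrix (Fin n) (Fin n) ℝ) (i j : Fin n) :
    |((gavmeMap C G)^[k] X - (gavmeMap C G)^[k] Y) i j| ≤ (matAbs C ^ k * matAbs (X - Y)) i j := by
  induction k generalizing i j with
  | zero => simp [matAbs]
  | succ k ih =>
    set T := gavmeMap C G
    rw [iterate_succ_apply', iterate_succ_apply', gavmeMap_sub_gavmeMap, pow_succ',
      Matrix.mul_assoc]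
    refine abs_mul_apply_le_of_abs_le C (fun l j => ?_) i j
    calc |(matAbs (T^[k] Y) - matAbs (T^[k] X)) l j| ≤ |(T^[k] X - T^[k] Y) l j| := by
          simpa only [matAbs, Matrix.sub_apply, abs_sub_comm] using abs_abs_sub_abs_le_abs_sub _ _
      _ ≤ _ := ih l j

theorem lipschitzWith_iterate_gavmeMap (C G : Matrix (Fin n) (Fin n) ℝ) (k : ℕ) :
    LipschitzWith ‖matAbs C ^ k‖₊ (gavmeMap C G)^[k] := by
  refine LipschitzWith.of_dist_le_mul fun X Y => ?_
  rw [dist_eq_norm, dist_eq_norm, ← coe_nnnorm, ← coe_nnnorm, ← NNReal.coe_mul, NNReal.coe_le_coe,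
    ← linfty_opNNNorm_matAbs (X - Y)]
  exact (linfty_opNNNorm_le_of_abs_le (abs_iterate_gavmeMap_sub_le C G k X Y)).trans
    (Matrix.linfty_opNNNorm_mul _ _)

theorem gavme_iff_isFixedPt_gavmeMap {A B F X : Matrix (Fin n) (Fin n) ℝ} (hA : IsUnit A) :
    A * X + B * matAbs X = F ↔ IsFixedPt (gavmeMap (A⁻¹ * B) (A⁻¹ * F)) X := by
  have hdet : IsUnit A.det := (Matrix.isUnit_iff_isUnit_det A).mp hA
  rw [IsFixedPt, gavmeMap, sub_eq_iff_eq_add', Matrix.mul_assoc]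
  constructor
  · rintro rfl
    rw [Matrix.mul_add, Matrix.nonsing_inv_mul_cancel_left _ _ hdet, add_comm]
  · intro h
    rw [← Matrix.mul_nonsing_inv_cancel_left A F hdet, h, Matrix.mul_add,
      Matrix.mul_nonsing_inv_cancel_left _ _ hdet, add_comm]

end GAVME

/-- If A is invertible and ρ(|A⁻¹B|) < 1, then for every F the GAVME
AX + B|X| = F has exactly one solution. -/
theorem gavme_unique_solution {n : ℕ} (A B : Matrix (Fin n) (Fin n) ℝ)
    (hA : IsUnit A) (h : specRad (matAbs (A⁻¹ * B)) < 1) :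
    ∀ F : Matrix (Fin n) (Fin n) ℝ,
      ∃! X : Matrix (Fin n) (Fin n) ℝ, A * X + B * matAbs X = F := by
  intro F
  obtain ⟨k, hk⟩ := exists_pow_linfty_opNNNorm_lt_one_of_specRad_lt_one h
  simpa only [gavme_iff_isFixedPt_gavmeMap hA] using
    ContractingWith.existsUnique_isFixedPt_of_iterate
      ⟨hk, lipschitzWith_iterate_gavmeMap (A⁻¹ * B) (A⁻¹ * F) k⟩
end

section
/- Let A, B ∈ ℝ^{n×n} with A invertible. If the spectral radius ρ(|A⁻¹B|) < 1, then for every f ∈ ℝⁿ the generalized absolute value equation Ax + B|x| = f has exactly one solution x ∈ ℝⁿ. -/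
/-!
This is Perov's vector-valued version of the Banach fixed point theorem. For invertible `A` the
equation reads `x = T x` with `T x = A⁻¹ f - (A⁻¹ B) |x|`, and `T` satisfies the componentwise
Lipschitz bound `|T x - T y| ≤ |A⁻¹ B| |x - y|`, hence `|Tᵏ x - Tᵏ y| ≤ |A⁻¹ B|ᵏ |x - y|`.
By Gelfand's formula `ρ(|A⁻¹ B|) < 1` makes `‖|A⁻¹ B|ᵏ‖_∞ < 1` for some `k`, so `Tᵏ` is a
contraction of `(ℝⁿ, ‖·‖_∞)` and `T` has exactly one fixed point.
-/

open Matrix Function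
open scoped ENNReal NNReal

attribute [local instance] Matrix.linftyOpNormedAddCommGroup Matrix.linftyOpNormedRing
  Matrix.linftyOpNormedAlgebra

variable {m n : Type*} [Fintype n]

instance Pi.instHasSolidNorm : HasSolidNorm (n → ℝ) where
  solid _ w h := (pi_norm_le_iff_of_nonneg (norm_nonneg w)).2 fun i =>
    (h i).trans (norm_le_pi_norm w i)

theorem abs_mulVec_le (C : Matrix m n ℝ) (v : n → ℝ) : |C *ᵥ v| ≤ C.map (|·|) *ᵥ |v| :=
  fun i => (Finset.abs_sum_le_sum_abs _ _).trans_eq <| by simp only [abs_mul]; rfl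

theorem mulVec_mono_of_nonneg {N : Matrix m n ℝ} (hN : ∀ i j, 0 ≤ N i j) {u v : n → ℝ}
    (huv : u ≤ v) : N *ᵥ u ≤ N *ᵥ v :=
  fun i => dotProduct_le_dotProduct_of_nonneg_left huv (hN i)

theorem abs_sub_le_mulVec_abs_sub (C : Matrix m n ℝ) (g : m → ℝ) (x y : n → ℝ) :
    |(g - C *ᵥ |x|) - (g - C *ᵥ |y|)| ≤ C.map (|·|) *ᵥ |x - y| := by
  rw [sub_sub_sub_cancel_left, ← mulVec_sub]
  exact (abs_mulVec_le C _).trans <| mulVec_mono_of_nonneg (fun _ _ => abs_nonneg _) <|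
    (abs_abs_sub_abs_le y x).trans_eq (abs_sub_comm _ _)

section SquareMatrix

variable [Fintype m] [DecidableEq m]

theorem spectralRadius_map_ofReal_le_ofReal_specRad (M : Matrix m m ℝ) :
    spectralRadius ℂ (M.map Complex.ofReal) ≤ ENNReal.ofReal (specRad M) := by
  have hbdd : BddAbove ((‖·‖) '' spectrum ℂ (M.map Complex.ofReal)) :=
    ((spectrum.isCompact _).image continuous_norm).bddAbove
  refine iSup₂_le fun z hz => ?_
  rw [← ENNReal.ofReal_coe_nnreal, coe_nnnorm]
  exact ENNReal.ofReal_le_ofReal (le_csSup hbdd ⟨z, hz, rfl⟩)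

theorem exists_nnnorm_pow_lt_one_of_specRad_lt_one {M : Matrix m m ℝ} (h : specRad M < 1) :
    ∃ k, ‖M ^ k‖₊ < 1 := by
  have hρ : spectralRadius ℂ (M.map Complex.ofReal) < 1 :=
    (spectralRadius_map_ofReal_le_ofReal_specRad M).trans_lt (ENNReal.ofReal_lt_one.2 h)
  obtain ⟨k, hk_pos, hk⟩ := ((Filter.eventually_ge_atTop 1).and
    ((spectrum.pow_nnnorm_pow_one_div_tendsto_nhds_spectralRadius _).eventually_lt_const hρ)).exists
  have hnorm : ‖M.map Complex.ofReal ^ k‖₊ = ‖M ^ k‖₊ := by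
    have hpow : M.map Complex.ofReal ^ k = (M ^ k).map Complex.ofReal :=
      (map_pow Complex.ofRealHom.mapMatrix M k).symm
    simp_rw [hpow, linfty_opNNNorm_def, map_apply, Complex.nnnorm_real]
  refine ⟨k, ?_⟩
  by_contra! hge
  rw [hnorm] at hk
  exact (ENNReal.one_le_rpow (by exact_mod_cast hge) (by positivity)).not_gt hk

theorem abs_iterate_sub_le {F : (m → ℝ) → m → ℝ} {N : Matrix m m ℝ} (hN : ∀ i j, 0 ≤ N i j)
    (hF : ∀ x y, |F x - F y| ≤ N *ᵥ |x - y|) (k : ℕ) (x y : m → ℝ) :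
    |F^[k] x - F^[k] y| ≤ (N ^ k) *ᵥ |x - y| := by
  induction k with
  | zero => simp
  | succ k ih =>
    calc |F^[k + 1] x - F^[k + 1] y| ≤ N *ᵥ |F^[k] x - F^[k] y| := by
          simpa only [iterate_succ_apply'] using hF _ _
      _ ≤ N *ᵥ ((N ^ k) *ᵥ |x - y|) := mulVec_mono_of_nonneg hN ih
      _ = (N ^ (k + 1)) *ᵥ |x - y| := by rw [mulVec_mulVec, pow_succ']

theorem lipschitzWith_of_abs_sub_le_mulVec {F : (m → ℝ) → m → ℝ} {N : Matrix m m ℝ}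
    (hF : ∀ x y, |F x - F y| ≤ N *ᵥ |x - y|) : LipschitzWith ‖N‖₊ F := by
  refine LipschitzWith.of_dist_le_mul fun x y => ?_
  calc dist (F x) (F y) = ‖F x - F y‖ := dist_eq_norm _ _
    _ ≤ ‖N *ᵥ |x - y|‖ := HasSolidNorm.solid ((hF x y).trans (le_abs_self _))
    _ ≤ ‖N‖ * ‖|x - y|‖ := linfty_opNorm_mulVec _ _
    _ = ‖N‖₊ * dist x y := by rw [norm_abs_eq_norm, dist_eq_norm, coe_nnnorm]

theorem existsUnique_isFixedPt_of_abs_sub_le_mulVec {F : (m → ℝ) → m → ℝ} {N : Matrix m m ℝ}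
    (hN : ∀ i j, 0 ≤ N i j) (hρ : specRad N < 1) (hF : ∀ x y, |F x - F y| ≤ N *ᵥ |x - y|) :
    ∃! x, IsFixedPt F x := by
  obtain ⟨k, hk⟩ := exists_nnnorm_pow_lt_one_of_specRad_lt_one hρ
  have hc : ContractingWith ‖N ^ k‖₊ F^[k] :=
    ⟨hk, lipschitzWith_of_abs_sub_le_mulVec (abs_iterate_sub_le hN hF k)⟩
  exact ⟨_, hc.isFixedPt_fixedPoint_iterate, fun y hy => hc.fixedPoint_unique (hy.iterate k)⟩

theorem add_mulVec_abs_eq_iff_isFixedPt {A B : Matrix m m ℝ} (hA : IsUnit A) (f x : m → ℝ) :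
    A *ᵥ x + B *ᵥ |x| = f ↔ IsFixedPt (fun x => A⁻¹ *ᵥ f - (A⁻¹ * B) *ᵥ |x|) x := by
  have hdet : IsUnit A.det := (isUnit_iff_isUnit_det A).1 hA
  have hfactor : A *ᵥ x + B *ᵥ |x| = A *ᵥ (x + (A⁻¹ * B) *ᵥ |x|) := by
    rw [mulVec_add, mulVec_mulVec, mul_nonsing_inv_cancel_left _ _ hdet]
  rw [hfactor, IsFixedPt, sub_eq_iff_eq_add]
  constructor
  · rintro rfl
    rw [mulVec_mulVec, nonsing_inv_mul _ hdet, one_mulVec]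
  · intro h
    rw [← h, mulVec_mulVec, mul_nonsing_inv _ hdet, one_mulVec]

end SquareMatrix

/-- If A is invertible and ρ(|A⁻¹B|) < 1, then for every f ∈ ℝⁿ the GAVE
Ax + B|x| = f has exactly one solution x ∈ ℝⁿ. -/
theorem gave_unique_solution {n : ℕ} (A B : Matrix (Fin n) (Fin n) ℝ)
    (hA : IsUnit A)
    (h : specRad (fun i j => |(A⁻¹ * B) i j| : Matrix (Fin n) (Fin n) ℝ) < 1) :
    ∀ f : Fin n → ℝ,
      ∃! x : Fin n → ℝ, A.mulVec x + B.mulVec (fun i => |x i|) = f := by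
  intro f
  simp only [← Pi.abs_def, add_mulVec_abs_eq_iff_isFixedPt hA]
  exact existsUnique_isFixedPt_of_abs_sub_le_mulVec (fun i j => abs_nonneg _) h
    (abs_sub_le_mulVec_abs_sub _ _)
end

section
/- Let A, B, C ∈ ℝ^{n×n} with C invertible. If σ_max(|B|) < σ_min(AC⁻¹), then for every F ∈ ℝ^{n×n} the new generalized absolute value matrix equation AX + B|CX| = F has exactly one solution X ∈ ℝ^{n×n}. -/
open Matrix

/-- Largest singular value: the square root of the largest eigenvalue of MᵀM. -/
noncomputable def sigmaMax {n : ℕ} (M : Matrix (Fin n) (Fin n) ℝ) : ℝ :=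
  Real.sqrt (sSup (spectrum ℝ (Mᵀ * M)))

/-- Smallest singular value: the square root of the smallest eigenvalue of MᵀM. -/
noncomputable def sigmaMin {n : ℕ} (M : Matrix (Fin n) (Fin n) ℝ) : ℝ :=
  Real.sqrt (sInf (spectrum ℝ (Mᵀ * M)))

/-! With `Y = C X` and `D = A C⁻¹` the equation becomes `D Y + B |Y| = F`, whose solutions are the
fixed points of `T Y = D⁻¹ (F - B |Y|)`. In the Frobenius norm `T` is a contraction with constant
`σ_max(|B|) / σ_min(D) < 1`: the Rayleigh bounds `σ_min(D) ‖Z‖ ≤ ‖D Z‖` and `‖M Z‖ ≤ σ_max(M) ‖Z‖`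
follow from the positive semidefiniteness of `Zᵀ (MᵀM - c) Z` and `Zᵀ (c - MᵀM) Z`, and entrywise
`|B (|Y₁| - |Y₂|)| ≤ |B| ||Y₁| - |Y₂||` with `||Y₁| - |Y₂|| ≤ |Y₁ - Y₂|`. Banach's fixed point
theorem then gives exactly one solution. -/

open scoped Matrix.Norms.Frobenius

namespace Matrix

variable {m k : Type*} [Fintype m] [Fintype k]

theorem posSemidef_transpose_mul_self (M : Matrix m k ℝ) : (Mᵀ * M).PosSemidef := by
  simpa only [conjTranspose_eq_transpose_of_trivial] using posSemidef_conjTranspose_mul_self M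

theorem IsHermitian.mul_trace_le_of_le_spectrum [DecidableEq m] {S : Matrix m m ℝ}
    (hS : S.IsHermitian) {c : ℝ} (hc : ∀ μ ∈ spectrum ℝ S, c ≤ μ) (Y : Matrix m k ℝ) :
    c * (Yᵀ * Y).trace ≤ (Yᵀ * S * Y).trace := by
  have hshift : (S - algebraMap ℝ _ c).PosSemidef := by
    refine posSemidef_iff_isHermitian_and_spectrum_nonneg.mpr
      ⟨hS.sub (isHermitian_diagonal fun _ => c), ?_⟩
    rw [← spectrum.sub_singleton_eq]
    rintro _ ⟨μ, hμ, _, rfl, rfl⟩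
    exact sub_nonneg.mpr (hc μ hμ)
  have := (hshift.conjTranspose_mul_mul_same Y).trace_nonneg
  rw [conjTranspose_eq_transpose_of_trivial, Algebra.algebraMap_eq_smul_one, Matrix.mul_sub,
    Matrix.sub_mul, trace_sub, Matrix.mul_smul, Matrix.smul_mul, Matrix.mul_one, trace_smul,
    smul_eq_mul] at this
  linarith

theorem IsHermitian.trace_le_mul_of_spectrum_le [DecidableEq m] {S : Matrix m m ℝ}
    (hS : S.IsHermitian) {c : ℝ} (hc : ∀ μ ∈ spectrum ℝ S, μ ≤ c) (Y : Matrix m k ℝ) :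
    (Yᵀ * S * Y).trace ≤ c * (Yᵀ * Y).trace := by
  have := hS.neg.mul_trace_le_of_le_spectrum (c := -c) (fun μ hμ => ?_) Y
  · rw [Matrix.mul_neg, Matrix.neg_mul, trace_neg] at this
    linarith
  · rw [← spectrum.neg_eq] at hμ
    linarith [hc _ hμ]

theorem frobenius_norm_sq_eq_trace (Y : Matrix m k ℝ) : ‖Y‖ ^ 2 = (Yᵀ * Y).trace := by
  rw [frobenius_norm_def, ← Real.rpow_natCast, ← Real.rpow_mul (by positivity)]
  simp [trace, mul_apply, Finset.sum_comm (γ := m), sq]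

theorem frobenius_norm_le_of_abs_le {P Q : Matrix m k ℝ} (h : ∀ i j, |P i j| ≤ |Q i j|) :
    ‖P‖ ≤ ‖Q‖ := by
  rw [frobenius_norm_def, frobenius_norm_def]
  gcongr with i _ j _
  exact h i j

end Matrix

section SingularValues

variable {n : ℕ} {k : Type*} [Fintype k]

theorem sigmaMin_mul_norm_le (M : Matrix (Fin n) (Fin n) ℝ) (Y : Matrix (Fin n) k ℝ) :
    sigmaMin M * ‖Y‖ ≤ ‖M * Y‖ := by
  have hMM := posSemidef_transpose_mul_self M
  have h0 : 0 ≤ sInf (spectrum ℝ (Mᵀ * M)) :=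
    Real.sInf_nonneg fun _ hμ => (posSemidef_iff_isHermitian_and_spectrum_nonneg.mp hMM).2 hμ
  refine (pow_le_pow_iff_left₀ (by unfold sigmaMin; positivity) (norm_nonneg _) two_ne_zero).mp ?_
  rw [mul_pow, sigmaMin, Real.sq_sqrt h0, frobenius_norm_sq_eq_trace, frobenius_norm_sq_eq_trace,
    transpose_mul, Matrix.mul_assoc, ← Matrix.mul_assoc Mᵀ, ← Matrix.mul_assoc]
  exact hMM.isHermitian.mul_trace_le_of_le_spectrum
    (fun _ hμ => csInf_le finite_real_spectrum.bddBelow hμ) Y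

theorem norm_mul_le_sigmaMax_mul (M : Matrix (Fin n) (Fin n) ℝ) (Y : Matrix (Fin n) k ℝ) :
    ‖M * Y‖ ≤ sigmaMax M * ‖Y‖ := by
  have hMM := posSemidef_transpose_mul_self M
  have h0 : 0 ≤ sSup (spectrum ℝ (Mᵀ * M)) :=
    Real.sSup_nonneg fun _ hμ => (posSemidef_iff_isHermitian_and_spectrum_nonneg.mp hMM).2 hμ
  refine (pow_le_pow_iff_left₀ (norm_nonneg _) (by unfold sigmaMax; positivity) two_ne_zero).mp ?_
  rw [mul_pow, sigmaMax, Real.sq_sqrt h0, frobenius_norm_sq_eq_trace, frobenius_norm_sq_eq_trace,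
    transpose_mul, Matrix.mul_assoc, ← Matrix.mul_assoc Mᵀ, ← Matrix.mul_assoc]
  exact hMM.isHermitian.trace_le_mul_of_spectrum_le
    (fun _ hμ => le_csSup finite_real_spectrum.bddAbove hμ) Y

theorem isUnit_of_sigmaMin_pos {M : Matrix (Fin n) (Fin n) ℝ} (h : 0 < sigmaMin M) : IsUnit M := by
  have hpos : 0 < sInf (spectrum ℝ (Mᵀ * M)) := Real.sqrt_pos.mp h
  have hMM : IsUnit (Mᵀ * M) := (spectrum.zero_notMem_iff ℝ).mp fun h0 =>
    (csInf_le finite_real_spectrum.bddBelow h0).not_gt hpos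
  exact isUnit_of_mul_isUnit_right hMM

end SingularValues

section Abs

variable {n : ℕ}

theorem norm_matAbs (Z : Matrix (Fin n) (Fin n) ℝ) : ‖matAbs Z‖ = ‖Z‖ :=
  frobenius_norm_map_eq Z (fun a : ℝ => |a|) fun a => by simp

theorem norm_matAbs_sub_matAbs_le (Y₁ Y₂ : Matrix (Fin n) (Fin n) ℝ) :
    ‖matAbs Y₁ - matAbs Y₂‖ ≤ ‖Y₁ - Y₂‖ :=
  frobenius_norm_le_of_abs_le fun i j => abs_abs_sub_abs_le_abs_sub (Y₁ i j) (Y₂ i j)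

theorem norm_mul_le_norm_matAbs_mul_matAbs (B Z : Matrix (Fin n) (Fin n) ℝ) :
    ‖B * Z‖ ≤ ‖matAbs B * matAbs Z‖ := by
  refine frobenius_norm_le_of_abs_le fun i j => ?_
  calc |(B * Z) i j| ≤ ∑ l, |B i l * Z l j| := by
        rw [mul_apply]; exact Finset.abs_sum_le_sum_abs _ _
    _ = (matAbs B * matAbs Z) i j := by simp only [mul_apply, matAbs, abs_mul]
    _ ≤ |(matAbs B * matAbs Z) i j| := le_abs_self _

theorem norm_mul_matAbs_sub_mul_matAbs_le (B Y₁ Y₂ : Matrix (Fin n) (Fin n) ℝ) :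
    ‖B * matAbs Y₁ - B * matAbs Y₂‖ ≤ sigmaMax (matAbs B) * ‖Y₁ - Y₂‖ :=
  calc ‖B * matAbs Y₁ - B * matAbs Y₂‖
      ≤ ‖matAbs B * matAbs (matAbs Y₁ - matAbs Y₂)‖ := by
        rw [← Matrix.mul_sub]; exact norm_mul_le_norm_matAbs_mul_matAbs _ _
    _ ≤ sigmaMax (matAbs B) * ‖matAbs Y₁ - matAbs Y₂‖ := by
        rw [← norm_matAbs (matAbs Y₁ - matAbs Y₂)]; exact norm_mul_le_sigmaMax_mul _ _
    _ ≤ sigmaMax (matAbs B) * ‖Y₁ - Y₂‖ := by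
        gcongr
        · exact Real.sqrt_nonneg _
        · exact norm_matAbs_sub_matAbs_le Y₁ Y₂

end Abs

theorem ContractingWith.existsUnique_isFixedPt {α : Type*} [MetricSpace α] [Nonempty α]
    [CompleteSpace α] {K : NNReal} {f : α → α} (hf : ContractingWith K f) :
    ∃! x, Function.IsFixedPt f x :=
  ⟨hf.fixedPoint f, hf.fixedPoint_isFixedPt, fun _ hx => hf.fixedPoint_unique hx⟩

theorem existsUnique_mul_add_mul_matAbs_eq {n : ℕ} {D B : Matrix (Fin n) (Fin n) ℝ}
    (h : sigmaMax (matAbs B) < sigmaMin D) (F : Matrix (Fin n) (Fin n) ℝ) :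
    ∃! Y, D * Y + B * matAbs Y = F := by
  have hσ : 0 < sigmaMin D := (Real.sqrt_nonneg _).trans_lt h
  have hD : IsUnit D.det := (isUnit_iff_isUnit_det D).mp (isUnit_of_sigmaMin_pos hσ)
  let := invertibleOfIsUnitDet D hD
  set K := sigmaMax (matAbs B) / sigmaMin D
  have hK : 0 ≤ K := div_nonneg (Real.sqrt_nonneg _) hσ.le
  set T := fun Y => D⁻¹ * (F - B * matAbs Y)
  have hfix : ∀ Y, Function.IsFixedPt T Y ↔ D * Y + B * matAbs Y = F := fun Y => by
    rw [Function.IsFixedPt, inv_mul_eq_iff_eq_mul_of_invertible, sub_eq_iff_eq_add', eq_comm,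
      add_comm]
  have hlip : ∀ Y₁ Y₂, dist (T Y₁) (T Y₂) ≤ K * dist Y₁ Y₂ := fun Y₁ Y₂ => by
    have hsub : T Y₁ - T Y₂ = D⁻¹ * (B * matAbs Y₂ - B * matAbs Y₁) := by
      simp only [T, ← Matrix.mul_sub, sub_sub_sub_cancel_left]
    have hinv := sigmaMin_mul_norm_le D (T Y₁ - T Y₂)
    rw [hsub, mul_inv_cancel_left_of_invertible] at hinv
    rw [dist_eq_norm, dist_eq_norm, hsub, div_mul_eq_mul_div, le_div_iff₀' hσ,
      ← norm_neg (Y₁ - Y₂), neg_sub]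
    exact hinv.trans (norm_mul_matAbs_sub_mul_matAbs_le B Y₂ Y₁)
  have hT : ContractingWith K.toNNReal T :=
    ⟨by rw [← NNReal.coe_lt_coe, Real.coe_toNNReal _ hK]; exact (div_lt_one hσ).mpr h,
      LipschitzWith.of_dist_le_mul fun Y₁ Y₂ => by
        rw [Real.coe_toNNReal _ hK]; exact hlip Y₁ Y₂⟩
  simpa only [hfix] using hT.existsUnique_isFixedPt

/-- If C is invertible and σ_max(|B|) < σ_min(AC⁻¹), then for every F the NGAVME
AX + B|CX| = F has exactly one solution. -/
theorem ngavme_unique_of_sigma_abs {n : ℕ} (A B C : Matrix (Fin n) (Fin n) ℝ)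
    (hC : IsUnit C) (h : sigmaMax (matAbs B) < sigmaMin (A * C⁻¹)) :
    ∀ F : Matrix (Fin n) (Fin n) ℝ,
      ∃! X : Matrix (Fin n) (Fin n) ℝ, A * X + B * matAbs (C * X) = F := by
  intro F
  have hCinv : C⁻¹ * C = 1 := nonsing_inv_mul C ((isUnit_iff_isUnit_det C).mp hC)
  refine ((Units.mulLeft hC.unit).existsUnique_congr fun X => ?_).mpr
    (existsUnique_mul_add_mul_matAbs_eq h F)
  rw [Units.mulLeft_apply, IsUnit.unit_spec, Matrix.mul_assoc, ← Matrix.mul_assoc C⁻¹, hCinv,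
    Matrix.one_mul]
end

section
/- Let A, B, C ∈ ℝ^{n×n} with A invertible. If σ_max(CA⁻¹B) < 1, then for every F ∈ ℝ^{n×n} the new generalized absolute value matrix equation AX + B|CX| = F has exactly one solution X ∈ ℝ^{n×n}. -/
/-!
Substituting `X = A⁻¹ (F - B|CX|)` turns the equation into the fixed-point problem
`Y = C A⁻¹ F - M |Y|` for `Y = CX`, where `M = C A⁻¹ B`; solutions `X` correspond bijectively
to its fixed points via `Y ↦ A⁻¹ (F - B|Y|)`. For the Frobenius norm, `‖M Z‖ ≤ σ_max(M) ‖Z‖`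
(because `MᵀM ≤ λ_max(MᵀM) • 1` in the Loewner order) and `‖|Y| - |Y'|‖ ≤ ‖Y - Y'‖`, so
`Y ↦ C A⁻¹ F - M |Y|` is a contraction and Banach's fixed point theorem applies.
-/

open Matrix

open scoped MatrixOrder

attribute [local instance] Matrix.frobeniusNormedAddCommGroup Matrix.frobeniusNormedSpace

lemma Matrix.IsHermitian.le_algebraMap_sSup_spectrum {ι : Type*} [Fintype ι] [DecidableEq ι]
    {S : Matrix ι ι ℝ} (hS : S.IsHermitian) : S ≤ algebraMap ℝ _ (sSup (spectrum ℝ S)) :=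
  (le_algebraMap_iff_spectrum_le hS.isSelfAdjoint).2 fun _ hx ↦
    le_csSup S.finite_spectrum.bddAbove hx

lemma Matrix.frobenius_norm_sq_eq_trace_s8 {ι κ : Type*} [Fintype ι] [Fintype κ]
    (Z : Matrix ι κ ℝ) : ‖Z‖ ^ 2 = trace (Zᵀ * Z) := by
  rw [frobenius_norm_def, ← Real.sqrt_eq_rpow, Real.sq_sqrt (by positivity), Finset.sum_comm]
  simp [trace, mul_apply, sq]

lemma frobenius_norm_mul_le_sigmaMax_mul {n : ℕ} {κ : Type*} [Fintype κ]
    (M : Matrix (Fin n) (Fin n) ℝ) (Z : Matrix (Fin n) κ ℝ) :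
    ‖M * Z‖ ≤ sigmaMax M * ‖Z‖ := by
  set t := sSup (spectrum ℝ (Mᵀ * M))
  have hMM : (Mᵀ * M).IsHermitian := by
    simpa using isHermitian_conjTranspose_mul_self M
  have hpsd : (Zᵀ * (algebraMap ℝ _ t - Mᵀ * M) * Z).PosSemidef := by
    simpa using (le_iff.mp hMM.le_algebraMap_sSup_spectrum).conjTranspose_mul_mul_same Z
  have htrace : trace (Zᵀ * (algebraMap ℝ _ t - Mᵀ * M) * Z) =
      t * trace (Zᵀ * Z) - trace ((M * Z)ᵀ * (M * Z)) := by
    simp only [Algebra.algebraMap_eq_smul_one, Matrix.mul_sub, Matrix.sub_mul, Matrix.mul_smul,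
      Matrix.mul_one, smul_mul, trace_sub, trace_smul, smul_eq_mul, transpose_mul, Matrix.mul_assoc]
  have hsq : ‖M * Z‖ ^ 2 ≤ t * ‖Z‖ ^ 2 := by
    rw [frobenius_norm_sq_eq_trace_s8, frobenius_norm_sq_eq_trace_s8]
    linarith [hpsd.trace_nonneg]
  calc ‖M * Z‖ = √(‖M * Z‖ ^ 2) := (Real.sqrt_sq (norm_nonneg _)).symm
    _ ≤ √(t * ‖Z‖ ^ 2) := Real.sqrt_le_sqrt hsq
    _ = sigmaMax M * ‖Z‖ := by
        rw [Real.sqrt_mul' _ (sq_nonneg _), Real.sqrt_sq (norm_nonneg _), sigmaMax]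

lemma frobenius_norm_matAbs_sub_le {n : ℕ} (Y Y' : Matrix (Fin n) (Fin n) ℝ) :
    ‖matAbs Y - matAbs Y'‖ ≤ ‖Y - Y'‖ := by
  rw [frobenius_norm_def, frobenius_norm_def]
  gcongr with i _ j _
  exact abs_abs_sub_abs_le_abs_sub _ _

lemma contractingWith_sub_mul_matAbs {n : ℕ} (M G : Matrix (Fin n) (Fin n) ℝ)
    (hM : sigmaMax M < 1) :
    ContractingWith ⟨sigmaMax M, Real.sqrt_nonneg _⟩ fun Y ↦ G - M * matAbs Y := by
  refine ⟨hM, LipschitzWith.of_dist_le_mul fun Y Y' ↦ ?_⟩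
  rw [dist_eq_norm, dist_eq_norm, sub_sub_sub_cancel_left, ← Matrix.mul_sub]
  calc ‖M * (matAbs Y' - matAbs Y)‖ ≤ sigmaMax M * ‖matAbs Y' - matAbs Y‖ :=
        frobenius_norm_mul_le_sigmaMax_mul M _
    _ ≤ sigmaMax M * ‖Y - Y'‖ := by
        rw [← norm_neg, neg_sub]
        gcongr
        · exact Real.sqrt_nonneg _
        · exact frobenius_norm_matAbs_sub_le Y Y'

lemma existsUnique_eq_sub_mul_matAbs {n : ℕ} (M G : Matrix (Fin n) (Fin n) ℝ)
    (hM : sigmaMax M < 1) : ∃! Y, Y = G - M * matAbs Y := by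
  have hT := contractingWith_sub_mul_matAbs M G hM
  exact ⟨_, hT.fixedPoint_isFixedPt.symm, fun Y hY ↦ hT.fixedPoint_unique hY.symm⟩

/-- If A is invertible and σ_max(CA⁻¹B) < 1, then for every F the NGAVME
AX + B|CX| = F has exactly one solution. -/
theorem ngavme_unique_of_sigmaMax {n : ℕ} (A B C : Matrix (Fin n) (Fin n) ℝ)
    (hA : IsUnit A) (h : sigmaMax (C * A⁻¹ * B) < 1) :
    ∀ F : Matrix (Fin n) (Fin n) ℝ,
      ∃! X : Matrix (Fin n) (Fin n) ℝ, A * X + B * matAbs (C * X) = F := by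
  intro F
  obtain ⟨_⟩ := hA.nonempty_invertible
  have hsol (X) : A * X + B * matAbs (C * X) = F ↔ X = A⁻¹ * (F - B * matAbs (C * X)) := by
    rw [@eq_comm _ X, inv_mul_eq_iff_eq_mul_of_invertible, sub_eq_iff_eq_add, eq_comm]
  have hC_mul (Z) : C * (A⁻¹ * (F - B * Z)) = C * A⁻¹ * F - C * A⁻¹ * B * Z := by
    simp only [Matrix.mul_sub, Matrix.mul_assoc]
  obtain ⟨Y, hY, hY_unique⟩ := existsUnique_eq_sub_mul_matAbs _ (C * A⁻¹ * F) h
  refine ⟨A⁻¹ * (F - B * matAbs Y), (hsol _).2 ?_, fun X hX ↦ ?_⟩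
  · rw [(hC_mul _).trans hY.symm]
  · replace hX := (hsol X).1 hX
    have hCX_fixed : C * X = C * A⁻¹ * F - C * A⁻¹ * B * matAbs (C * X) := by
      conv_lhs => rw [hX]
      exact hC_mul _
    rw [hX, hY_unique _ hCX_fixed]
end

section
/- Let A, B, C ∈ ℝ^{n×n} with C invertible, and set R = I ⊗ (AC⁻¹) and S = I ⊗ B in ℝ^{n²×n²}, where I is the n×n identity matrix and ⊗ is the Kronecker product. If the pair {R+S, R−S} has the column W-property, then for every F ∈ ℝ^{n×n} the new generalized absolute value matrix equation AX + B|CX| = F has exactly one solution X ∈ ℝ^{n×n}. -/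
open Matrix Kronecker

/-- The pair {M₁, M₂} has the column W-property: every column representative matrix
(each of whose columns is the corresponding column of M₁ or of M₂) has positive
determinant. -/
def ColumnWProperty {m : Type*} [Fintype m] [DecidableEq m] (M₁ M₂ : Matrix m m ℝ) : Prop :=
  ∀ R : Matrix m m ℝ,
    (∀ j, (fun i => R i j) = (fun i => M₁ i j) ∨ (fun i => R i j) = (fun i => M₂ i j)) →
    0 < R.det

/-!
Put `Y = C X`. Since `vec (P Y) = (I ⊗ P) vec Y`, the equation becomes `R y + S |y| = f` for
`y = vec Y`, `f = vec F`, and `X ↦ vec (C X)` is a bijection. For `|t| ≤ 1` the map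
`Φₜ y = R y + t S |y|` satisfies `Φₜ a - Φₜ b = (R + S D)(a - b)` for a diagonal `D` with entries in
`[-1, 1]`. Each column of `R + S D` lies on the segment between the corresponding columns of
`R + S` and `R - S`, so by multilinearity of the determinant in the columns the column
W-property gives `det (R + S D) > 0`; compactness of the cube of such `D` makes all `Φₜ`
antilipschitz with one constant `K`. In particular `Φ₁` is injective. For surjectivity, a
surjective `K`-antilipschitz map stays surjective after adding a map that is Lipschitz with
constant `< 1/K` (Banach's fixed point theorem), so surjectivity passes from the linear map
`Φ₀ = R` to `Φ₁` in finitely many steps of `t`.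
-/

open scoped NNReal

section Continuation

variable {E : Type*} [NormedAddCommGroup E] [CompleteSpace E]

theorem Function.Surjective.add_of_antilipschitzWith {f g : E → E} {K L : ℝ≥0}
    (hsurj : Function.Surjective f) (hf : AntilipschitzWith K f) (hg : LipschitzWith L g)
    (hKL : K * L < 1) : Function.Surjective (f + g) := by
  intro w
  set f' := Function.surjInv hsurj
  have hf' : LipschitzWith K f' := LipschitzWith.of_dist_le_mul fun a b => by
    simpa only [f', Function.surjInv_eq hsurj] using hf.le_mul_dist (f' a) (f' b)
  have hcontr : ContractingWith (K * L) fun y => f' (w - g y) :=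
    ⟨hKL, hf'.comp (by simpa using (LipschitzWith.const w).sub hg)⟩
  obtain ⟨y, hy : f' (w - g y) = y, -⟩ := hcontr.exists_fixedPoint 0 (edist_ne_top _ _)
  have hfy : f (f' (w - g y)) = w - g y := Function.surjInv_eq hsurj _
  rw [hy] at hfy
  exact ⟨y, by rw [Pi.add_apply, hfy, sub_add_cancel]⟩

theorem Function.Surjective.add_of_forall_antilipschitzWith_add_smul [NormedSpace ℝ E]
    {f g : E → E} {K L : ℝ≥0} (hsurj : Function.Surjective f) (hg : LipschitzWith L g)
    (hf : ∀ t ∈ Set.Icc (0 : ℝ) 1, AntilipschitzWith K (f + t • g)) :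
    Function.Surjective (f + g) := by
  obtain ⟨N, hN⟩ := exists_nat_gt (K * L)
  have hNpos : (0 : ℝ) < N := by exact_mod_cast pos_of_gt hN
  have hsmall : K * (‖(1 / N : ℝ)‖₊ * L) < 1 := by
    rw [← NNReal.coe_lt_coe]
    push_cast
    rw [norm_div, norm_one, RCLike.norm_natCast, div_mul_eq_mul_div, one_mul, mul_div_assoc',
      div_lt_one hNpos]
    exact_mod_cast hN
  have hstep : ∀ k ≤ N, Function.Surjective (f + ((k : ℝ) / N) • g) := by
    intro k
    induction k with
    | zero => simpa using hsurj
    | succ k ih =>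
      intro hk
      have hkN : (k : ℝ) / N ≤ 1 :=
        div_le_one_of_le₀ (by exact_mod_cast (Nat.le_succ k).trans hk) hNpos.le
      rw [Nat.cast_succ, add_div, add_smul, ← add_assoc]
      exact (ih (by omega)).add_of_antilipschitzWith (hf _ ⟨by positivity, hkN⟩)
        ((lipschitzWith_smul _).comp hg) hsmall
  simpa [hNpos.ne'] using hstep N le_rfl

end Continuation

theorem exists_abs_le_one_abs_sub_abs_eq_mul (a b : ℝ) :
    ∃ q, |q| ≤ 1 ∧ |a| - |b| = q * (a - b) := by
  -- at `a = b` the quotient is the junk value `0`, which still works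
  refine ⟨(|a| - |b|) / (a - b), ?_, ?_⟩
  · rw [abs_div]
    exact div_le_one_of_le₀ (abs_abs_sub_abs_le_abs_sub a b) (abs_nonneg _)
  · rcases eq_or_ne a b with rfl | hab
    · simp
    · rw [div_mul_cancel₀ _ (sub_ne_zero.2 hab)]

section AbsoluteValueEquation

variable {m : Type*} [Fintype m]

attribute [local instance] Matrix.linftyOpNormedAddCommGroup

theorem lipschitzWith_mulVec_abs (N : Matrix m m ℝ) :
    LipschitzWith ‖N‖₊ fun y : m → ℝ => N *ᵥ |y| :=
  LipschitzWith.of_dist_le_mul fun a b => by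
    rw [dist_eq_norm, dist_eq_norm, ← mulVec_sub]
    refine (linfty_opNorm_mulVec _ _).trans (mul_le_mul_of_nonneg_left ?_ (norm_nonneg _))
    refine pi_norm_le_iff_of_nonneg (norm_nonneg _) |>.2 fun i => ?_
    simpa only [Pi.sub_apply, Pi.abs_apply, Real.norm_eq_abs] using
      (abs_abs_sub_abs_le_abs_sub (a i) (b i)).trans (norm_le_pi_norm (a - b) i)

variable [DecidableEq m]

theorem IsCompact.exists_forall_norm_le_mul_norm_mulVec {𝕜 X : Type*} [NormedField 𝕜]
    [TopologicalSpace X] {S : Set X} (hS : IsCompact S) {T : X → Matrix m m 𝕜} (hT : Continuous T)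
    (hdet : ∀ x ∈ S, (T x).det ≠ 0) : ∃ K : ℝ≥0, ∀ x ∈ S, ∀ v, ‖v‖ ≤ K * ‖T x *ᵥ v‖ := by
  have hinv : ContinuousOn (fun x => (T x)⁻¹) S := by
    simp only [inv_def, Ring.inverse_eq_inv']
    exact (hT.matrix_det.continuousOn.inv₀ hdet).smul hT.matrix_adjugate.continuousOn
  obtain ⟨K, hK⟩ := hS.exists_bound_of_continuousOn hinv
  refine ⟨K.toNNReal, fun x hx v => ?_⟩
  calc ‖v‖ = ‖(T x)⁻¹ *ᵥ (T x *ᵥ v)‖ := by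
        rw [mulVec_mulVec, nonsing_inv_mul _ (hdet x hx).isUnit, one_mulVec]
    _ ≤ ‖(T x)⁻¹‖ * ‖T x *ᵥ v‖ := linfty_opNorm_mulVec _ _
    _ ≤ K.toNNReal * ‖T x *ᵥ v‖ := by
        gcongr
        exact (hK x hx).trans (Real.le_coe_toNNReal K)

theorem ColumnWProperty.det_pos_of_col_mem_segment {M₁ M₂ R : Matrix m m ℝ}
    (h : ColumnWProperty M₁ M₂) (hR : ∀ j, Rᵀ j ∈ segment ℝ (M₁ᵀ j) (M₂ᵀ j)) : 0 < R.det := by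
  suffices ∀ s : Finset m, ∀ R : Matrix m m ℝ, (∀ j, Rᵀ j ∈ segment ℝ (M₁ᵀ j) (M₂ᵀ j)) →
      (∀ j ∉ s, Rᵀ j = M₁ᵀ j ∨ Rᵀ j = M₂ᵀ j) → 0 < R.det from
    this Finset.univ R hR (by simp)
  intro s
  induction s using Finset.induction_on with
  | empty => exact fun R _ hR => h R fun j => hR j (Finset.notMem_empty j)
  | insert a s ha ih =>
    intro R hseg hend
    have hcol_self : ∀ x, (R.updateCol a x)ᵀ a = x := fun x => by
      ext i; simp
    have hcol_ne : ∀ x, ∀ j ≠ a, (R.updateCol a x)ᵀ j = Rᵀ j := fun x j hja => by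
      ext i; simp [hja]
    have hpos : ∀ x, x = M₁ᵀ a ∨ x = M₂ᵀ a → 0 < (R.updateCol a x).det := by
      intro x hx
      refine ih _ (fun j => ?_) (fun j hj => ?_) <;> by_cases hja : j = a
      · subst hja
        rcases hx with rfl | rfl
        exacts [hcol_self _ ▸ left_mem_segment ℝ _ _, hcol_self _ ▸ right_mem_segment ℝ _ _]
      · exact hcol_ne x j hja ▸ hseg j
      · subst hja
        rwa [hcol_self]
      · exact hcol_ne x j hja ▸ hend j (by simp [hja, hj])
    obtain ⟨θ, η, hθ, hη, hθη, hRa⟩ := hseg a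
    rw [← R.updateCol_eq_self a, ← show Rᵀ a = fun i => R i a from rfl, ← hRa,
      det_updateCol_add, det_updateCol_smul, det_updateCol_smul]
    exact convex_Ioi (0 : ℝ) (hpos _ (.inl rfl)) (hpos _ (.inr rfl)) hθ hη hθη

theorem ColumnWProperty.det_add_mul_diagonal_pos {M N : Matrix m m ℝ}
    (h : ColumnWProperty (M + N) (M - N)) {d : m → ℝ} (hd : ∀ j, d j ∈ Set.Icc (-1 : ℝ) 1) :
    0 < (M + N * diagonal d).det := by
  refine h.det_pos_of_col_mem_segment fun j =>
    ⟨(1 + d j) / 2, (1 - d j) / 2, by linarith [(hd j).1], by linarith [(hd j).2], by ring, ?_⟩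
  ext i
  simp only [Pi.add_apply, Pi.smul_apply, transpose_apply, Matrix.add_apply, Matrix.sub_apply,
    mul_diagonal, smul_eq_mul]
  ring

theorem ColumnWProperty.exists_antilipschitzWith {M N : Matrix m m ℝ}
    (h : ColumnWProperty (M + N) (M - N)) :
    ∃ K : ℝ≥0, ∀ t : ℝ, |t| ≤ 1 →
      AntilipschitzWith K fun y : m → ℝ => M *ᵥ y + t • N *ᵥ |y| := by
  obtain ⟨K, hK⟩ :=
    (isCompact_univ_pi fun _ => isCompact_Icc).exists_forall_norm_le_mul_norm_mulVec
      (T := fun d => M + N * diagonal d) (by fun_prop)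
      fun d hd => (h.det_add_mul_diagonal_pos fun j => hd j (Set.mem_univ j)).ne'
  refine ⟨K, fun t ht => AntilipschitzWith.of_le_mul_dist fun a b => ?_⟩
  choose q hq1 hq using fun i => exists_abs_le_one_abs_sub_abs_eq_mul (a i) (b i)
  have hdiag : diagonal (t • q) *ᵥ (a - b) = t • (|a| - |b|) := by
    ext i
    simp only [mulVec_diagonal, Pi.smul_apply, smul_eq_mul, Pi.sub_apply, Pi.abs_apply, hq i]
    ring
  have hdiff : (M *ᵥ a + t • N *ᵥ |a|) - (M *ᵥ b + t • N *ᵥ |b|)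
      = (M + N * diagonal (t • q)) *ᵥ (a - b) := by
    rw [add_mulVec, ← mulVec_mulVec, hdiag, mulVec_smul, mulVec_sub, mulVec_sub, smul_sub]
    abel
  rw [dist_eq_norm, dist_eq_norm, hdiff]
  refine hK _ (fun i _ => abs_le.1 ?_) _
  rw [Pi.smul_apply, smul_eq_mul, abs_mul]
  exact mul_le_one₀ ht (abs_nonneg _) (hq1 i)

theorem ColumnWProperty.existsUnique_mulVec_add_mulVec_abs_eq {M N : Matrix m m ℝ}
    (h : ColumnWProperty (M + N) (M - N)) (f : m → ℝ) : ∃! y, M *ᵥ y + N *ᵥ |y| = f := by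
  obtain ⟨K, hK⟩ := h.exists_antilipschitzWith
  have hM : Function.Surjective (M *ᵥ ·) := by
    refine mulVec_surjective_iff_isUnit.2 ((isUnit_iff_isUnit_det M).2 (ne_of_gt ?_).isUnit)
    simpa using h.det_add_mul_diagonal_pos (d := 0) fun _ => by norm_num
  have hsurj : Function.Surjective fun y : m → ℝ => M *ᵥ y + N *ᵥ |y| :=
    hM.add_of_forall_antilipschitzWith_add_smul (lipschitzWith_mulVec_abs N) fun t ht =>
      hK t (abs_le.2 ⟨by linarith [ht.1], ht.2⟩)
  have hinj : Function.Injective fun y : m → ℝ => M *ᵥ y + N *ᵥ |y| := by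
    simpa using (hK 1 (by norm_num)).injective
  exact Function.Bijective.existsUnique ⟨hinj, hsurj⟩ f

end AbsoluteValueEquation

/-- With R = I ⊗ (AC⁻¹), S = I ⊗ B, if {R+S, R−S} has the column W-property then
for every F the NGAVME AX + B|CX| = F has exactly one solution. -/
theorem ngavme_unique_of_columnW {n : ℕ} (A B C : Matrix (Fin n) (Fin n) ℝ)
    (hC : IsUnit C)
    (h : ColumnWProperty
        ((1 : Matrix (Fin n) (Fin n) ℝ) ⊗ₖ (A * C⁻¹) + (1 : Matrix (Fin n) (Fin n) ℝ) ⊗ₖ B)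
        ((1 : Matrix (Fin n) (Fin n) ℝ) ⊗ₖ (A * C⁻¹) - (1 : Matrix (Fin n) (Fin n) ℝ) ⊗ₖ B)) :
    ∀ F : Matrix (Fin n) (Fin n) ℝ,
      ∃! X : Matrix (Fin n) (Fin n) ℝ, A * X + B * matAbs (C * X) = F := by
  intro F
  have hvec : ∀ X, vec (A * X + B * matAbs (C * X)) =
      (1 ⊗ₖ (A * C⁻¹)) *ᵥ vec (C * X) + (1 ⊗ₖ B) *ᵥ |vec (C * X)| := fun X => by
    have hAX : A * X = A * C⁻¹ * (C * X) := by
      rw [Matrix.mul_assoc, ← Matrix.mul_assoc C⁻¹,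
        nonsing_inv_mul C ((isUnit_iff_isUnit_det C).1 hC), Matrix.one_mul]
    have habs : vec (matAbs (C * X)) = |vec (C * X)| := rfl
    rw [vec_add, hAX, vec_mul_eq_mulVec (A * C⁻¹), vec_mul_eq_mulVec B, habs]
  have hbij : Function.Bijective fun X => vec (C * X) :=
    vec_bijective.comp (IsUnit.isUnit_iff_mulLeft_bijective.1 hC)
  simp_rw [← vec_inj, hvec]
  exact hbij.existsUnique_iff.1 (h.existsUnique_mulVec_add_mulVec_abs_eq (vec F))
end

section
/- Let A, B, C ∈ ℝ^{n×n} with C invertible, and set R = I ⊗ (AC⁻¹) and S = I ⊗ B in ℝ^{n²×n²}, where I is the n×n identity matrix and ⊗ is the Kronecker product. If R+S is invertible and the pair {I_{n²}, (R+S)⁻¹(R−S)} has the column W-property (I_{n²} being the n²×n² identity matrix), then for every F ∈ ℝ^{n×n} the new generalized absolute value matrix equation AX + B|CX| = F has exactly one solution X ∈ ℝ^{n×n}. -/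
open Matrix Kronecker

/-!
Put `y = vec (C X)`, `R = I ⊗ (A C⁻¹)` and `S = I ⊗ B`. Since `vec (P Q) = (I ⊗ P) vec Q`, the
equation reads `R y + S |y| = vec F`, and `y = y⁺ - y⁻`, `|y| = y⁺ + y⁻` turn it into
`y⁺ - W y⁻ = (R + S)⁻¹ vec F` with `W = (R + S)⁻¹ (R - S)`. So it suffices that
`Φ y = y⁺ - W y⁻` is bijective.

Coordinatewise `a⁺ - b⁺ = τ (a - b)` with `τ ∈ [0, 1]`, so `Φ a - Φ b = M_t (a - b)`, where column
`j` of `M_t` is `t_j e_j + (1 - t_j) W_j`. Multilinearity writes `det M_t` as a convex combination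
of the determinants of the column representatives of `{I, W}`, so `det M_t > 0` on the cube, and by
compactness `Φ` is antilipschitz, in particular injective.

Surjectivity goes by induction on the dimension, the hypothesis passing to the trailing principal
submatrix: solving the last `N` equations with the first unknown fixed to `s` gives a curve,
continuous because the smaller `Φ` is antilipschitz, along which the first component of `Φ` is a
continuous antilipschitz function of `s ∈ ℝ`, hence onto `ℝ`.
-/

open Function
open scoped NNReal

theorem Continuous.surjective_of_antilipschitzWith {f : ℝ → ℝ} (hf : Continuous f) {K : ℝ≥0}
    (hK : AntilipschitzWith K f) : Surjective f := by
  wlog hmono : StrictMono f generalizing f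
  · have hanti := (hf.strictMono_of_inj hK.injective).resolve_left hmono
    have hK' : AntilipschitzWith K (-f) :=
      AntilipschitzWith.of_le_mul_dist fun x y => by simpa using hK.le_mul_dist x y
    exact fun y => (this hf.neg hK' hanti.neg (-y)).imp fun x hx => neg_injective hx
  have hgrow : ∀ x y, x ≤ y → y - x ≤ K * (f y - f x) := fun x y hxy => by
    simpa [Real.dist_eq, abs_of_nonpos, sub_nonpos.2 hxy, sub_nonpos.2 (hmono.monotone hxy)]
      using hK.le_mul_dist x y
  refine hf.surjective (hmono.monotone.tendsto_atTop_atTop fun b => ?_)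
    (hmono.monotone.tendsto_atBot_atBot fun b => ?_)
  · refine ⟨K * |b - f 0| + 1, not_lt.1 fun hlt => ?_⟩
    have h₁ := hgrow 0 (K * |b - f 0| + 1) (by positivity)
    have h₂ := mul_le_mul_of_nonneg_left
      ((sub_le_sub_right hlt.le (f 0)).trans (le_abs_self _)) K.coe_nonneg
    linarith
  · refine ⟨-(K * |b - f 0| + 1), not_lt.1 fun hlt => ?_⟩
    have h₁ := hgrow (-(K * |b - f 0| + 1)) 0 (neg_nonpos.2 (by positivity))
    have h₂ := mul_le_mul_of_nonneg_left
      ((sub_le_sub_left hlt.le (f 0)).trans ((le_abs_self _).trans_eq (abs_sub_comm _ _)))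
      K.coe_nonneg
    linarith

theorem exists_mem_Icc_mul_sub_eq_posPart_sub (a b : ℝ) :
    ∃ τ ∈ Set.Icc (0 : ℝ) 1, τ * (a - b) = a⁺ - b⁺ := by
  wlog hba : b ≤ a generalizing a b
  · obtain ⟨τ, hτ, h⟩ := this b a (le_of_not_ge hba)
    exact ⟨τ, hτ, by linarith⟩
  have hmono : b⁺ ≤ a⁺ := posPart_mono hba
  have hlip : a⁺ - b⁺ ≤ a - b := by
    have := (le_abs_self _).trans (abs_max_sub_max_le_abs a b 0)
    rwa [abs_of_nonneg (sub_nonneg.2 hba)] at this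
  rcases hba.eq_or_lt with rfl | hlt
  · exact ⟨0, by simp, by simp⟩
  · have hd : 0 < a - b := sub_pos.2 hlt
    exact ⟨(a⁺ - b⁺) / (a - b), ⟨div_nonneg (sub_nonneg.2 hmono) hd.le,
      div_le_one_of_le₀ hlip hd.le⟩, div_mul_cancel₀ _ hd.ne'⟩

section LCP

variable {ι : Type*} [Fintype ι]

/-- `x⁺ - W x⁻ = q` exactly when `(x⁻, x⁺)` solves the linear complementarity problem
`LCP(q, W)`. -/
noncomputable def lcpMap (W : Matrix ι ι ℝ) (x : ι → ℝ) : ι → ℝ := x⁺ - W *ᵥ x⁻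

theorem continuous_lcpMap (W : Matrix ι ι ℝ) : Continuous (lcpMap W) := by
  have hpos : Continuous fun x : ι → ℝ => x⁺ := continuous_pi fun i => by
    simp only [Pi.posPart_apply]; exact continuous_posPart.comp (continuous_apply i)
  have hneg : Continuous fun x : ι → ℝ => x⁻ := continuous_pi fun i => by
    simp only [Pi.negPart_apply]; exact continuous_negPart.comp (continuous_apply i)
  exact hpos.sub (continuous_const.matrix_mulVec hneg)

theorem lcpMap_reindex {κ : Type*} [Fintype κ] (e : ι ≃ κ) (W : Matrix ι ι ℝ) (x : ι → ℝ) :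
    lcpMap (Matrix.reindex e e W) (x ∘ e.symm) = lcpMap W x ∘ e.symm := by
  ext k
  have hneg : (x ∘ e.symm)⁻ ∘ e = x⁻ := by
    ext
    simp [Pi.negPart_apply]
  simp [lcpMap, reindex_apply, submatrix_mulVec_equiv, Pi.posPart_apply, hneg]

variable [DecidableEq ι]

/-- Column `j` is `t j • eⱼ + (1 - t j) • Wⱼ`; for `t ∈ {0, 1}ᶥ` these are the column
representatives of `{1, W}`. -/
def columnComb (W : Matrix ι ι ℝ) (t : ι → ℝ) : Matrix ι ι ℝ := diagonal t + W * diagonal (1 - t)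

def ColumnCombPos (W : Matrix ι ι ℝ) : Prop :=
  ∀ t ∈ Set.Icc (0 : ι → ℝ) 1, 0 < (columnComb W t).det

theorem columnComb_apply (W : Matrix ι ι ℝ) (t : ι → ℝ) (i j : ι) :
    columnComb W t i j = (if i = j then t j else 0) + (1 - t j) * W i j := by
  simp only [columnComb, Matrix.add_apply, diagonal_apply, mul_diagonal, Pi.sub_apply,
    Pi.one_apply]
  split_ifs with h
  · subst h; ring
  · ring

theorem continuous_columnComb (W : Matrix ι ι ℝ) : Continuous (columnComb W) := by
  unfold columnComb
  fun_prop

theorem det_columnComb (W : Matrix ι ι ℝ) (t : ι → ℝ) :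
    (columnComb W t).det = ∑ s : Finset ι, (∏ j, if j ∈ s then t j else 1 - t j) *
      (of fun i j => if j ∈ s then (1 : Matrix ι ι ℝ) i j else W i j).det := by
  have hrows : (columnComb W t)ᵀ =
      (fun j => t j • (1 : Matrix ι ι ℝ)ᵀ j) + fun j => (1 - t j) • Wᵀ j := by
    ext j i
    rcases eq_or_ne i j with rfl | hij
    · simp [columnComb_apply]
    · simp [columnComb_apply, hij, hij.symm]
  rw [← det_transpose, hrows]
  change detRowAlternating (_ + _) = _
  rw [AlternatingMap.map_add_univ]
  refine Finset.sum_congr rfl fun s _ => ?_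
  set rep : Matrix ι ι ℝ := of fun i j => if j ∈ s then (1 : Matrix ι ι ℝ) i j else W i j
  have hpiece : s.piecewise (fun j => t j • (1 : Matrix ι ι ℝ)ᵀ j) (fun j => (1 - t j) • Wᵀ j) =
      fun j => (if j ∈ s then t j else 1 - t j) • repᵀ j := by
    ext j i
    by_cases hj : j ∈ s <;> simp [hj, rep, one_apply, eq_comm]
  rw [hpiece]
  exact (detRowAlternating.map_smul_univ _ repᵀ).trans (congrArg (_ * ·) (det_transpose rep))

theorem ColumnWProperty.columnCombPos {W : Matrix ι ι ℝ} (h : ColumnWProperty 1 W) :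
    ColumnCombPos W := by
  intro t ⟨ht₀, ht₁⟩
  have hrep : ∀ s : Finset ι,
      0 < (of fun i j => if j ∈ s then (1 : Matrix ι ι ℝ) i j else W i j).det :=
    fun s => h _ fun j => by by_cases hj : j ∈ s <;> simp [hj]
  have hweight : ∀ s : Finset ι, 0 ≤ ∏ j, if j ∈ s then t j else 1 - t j :=
    fun s => Finset.prod_nonneg fun j _ => by
      split_ifs
      · exact ht₀ j
      · exact sub_nonneg.2 (ht₁ j)
  rw [det_columnComb]
  -- the representative taking column `j` from `1` exactly when `0 < t j` has positive weight
  refine Finset.sum_pos' (fun s _ => mul_nonneg (hweight s) (hrep s).le)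
    ⟨Finset.univ.filter fun j => 0 < t j, Finset.mem_univ _,
      mul_pos (Finset.prod_pos fun j _ => ?_) (hrep _)⟩
  by_cases hj : 0 < t j
  · simp [hj]
  · simp only [Finset.mem_filter, Finset.mem_univ, true_and, hj, if_false]
    linarith [ht₀ j]

theorem ColumnCombPos.submatrix_succ {N : ℕ} {M : Matrix (Fin (N + 1)) (Fin (N + 1)) ℝ}
    (hM : ColumnCombPos M) : ColumnCombPos (M.submatrix Fin.succ Fin.succ) := by
  intro t ⟨ht₀, ht₁⟩
  have hcons : (Fin.cons 1 t : Fin (N + 1) → ℝ) ∈ Set.Icc 0 1 :=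
    ⟨fun i => Fin.cases (by simp) (fun i => by simpa using ht₀ i) i,
      fun i => Fin.cases (by simp) (fun i => by simpa using ht₁ i) i⟩
  have hsub : columnComb (M.submatrix Fin.succ Fin.succ) t =
      (columnComb M (Fin.cons 1 t)).submatrix Fin.succ Fin.succ := by
    ext i j
    simp [columnComb_apply]
  have hcol : ∀ i, columnComb M (Fin.cons 1 t) i 0 = if i = 0 then 1 else 0 := by
    simp [columnComb_apply]
  have hdet : (columnComb M (Fin.cons 1 t)).det =
      (columnComb (M.submatrix Fin.succ Fin.succ) t).det := by
    rw [det_succ_column_zero, Fin.sum_univ_succ, Finset.sum_eq_zero fun i _ => by simp [hcol],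
      hcol, hsub]
    simp
  exact hdet ▸ hM _ hcons

theorem ColumnCombPos.reindex {κ : Type*} [Fintype κ] [DecidableEq κ] {W : Matrix ι ι ℝ}
    (hW : ColumnCombPos W) (e : ι ≃ κ) : ColumnCombPos (Matrix.reindex e e W) := by
  intro t ⟨ht₀, ht₁⟩
  have : columnComb (Matrix.reindex e e W) t = Matrix.reindex e e (columnComb W (t ∘ e)) := by
    ext i j
    simp [columnComb_apply, e.symm_apply_eq]
  rw [this, det_reindex_self]
  exact hW _ ⟨fun i => ht₀ (e i), fun i => ht₁ (e i)⟩

theorem exists_lcpMap_sub_eq_columnComb_mulVec (W : Matrix ι ι ℝ) (a b : ι → ℝ) :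
    ∃ t ∈ Set.Icc (0 : ι → ℝ) 1, lcpMap W a - lcpMap W b = columnComb W t *ᵥ (a - b) := by
  choose τ hτ hτ_eq using fun i => exists_mem_Icc_mul_sub_eq_posPart_sub (a i) (b i)
  refine ⟨τ, ⟨fun i => (hτ i).1, fun i => (hτ i).2⟩, ?_⟩
  have hpos : τ * (a - b) = a⁺ - b⁺ := funext fun i => by simp [hτ_eq i]
  have hneg : (1 - τ) * (a - b) = -(a⁻ - b⁻) := by
    rw [sub_mul, one_mul, hpos]
    nth_rw 1 [← posPart_sub_negPart a, ← posPart_sub_negPart b]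
    abel
  have hdiag : ∀ v w : ι → ℝ, diagonal v *ᵥ w = v * w := fun v w => funext (mulVec_diagonal v w)
  rw [columnComb, add_mulVec, ← mulVec_mulVec, hdiag, hdiag, hpos, hneg, mulVec_neg, lcpMap,
    lcpMap, mulVec_sub]
  abel

theorem exists_norm_le_mul_norm_mulVec {X : Type*} [TopologicalSpace X] {s : Set X}
    (hs : IsCompact s) {M : X → Matrix ι ι ℝ} (hM : Continuous M)
    (hdet : ∀ x ∈ s, (M x).det ≠ 0) :
    ∃ K : ℝ≥0, ∀ x ∈ s, ∀ v, ‖v‖ ≤ K * ‖M x *ᵥ v‖ := by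
  obtain ⟨c, hc, hc_le⟩ := (hs.prod (isCompact_sphere (0 : ι → ℝ) 1)).exists_forall_le'
    (f := fun p => ‖M p.1 *ᵥ p.2‖) (by fun_prop) (a := 0) fun p hp => by
      refine norm_pos_iff.2 fun h0 => ?_
      have := eq_zero_of_mulVec_eq_zero (hdet _ hp.1) h0
      simpa [this] using hp.2
  refine ⟨⟨c⁻¹, inv_nonneg.2 hc.le⟩, fun x hx v => ?_⟩
  rcases eq_or_ne v 0 with rfl | hv
  · simp
  have hv' : 0 < ‖v‖ := norm_pos_iff.2 hv
  have := hc_le (x, ‖v‖⁻¹ • v) ⟨hx, by simp [norm_smul, hv'.ne']⟩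
  simp only [mulVec_smul, norm_smul, norm_inv, norm_norm] at this
  change ‖v‖ ≤ c⁻¹ * _
  rw [← div_eq_inv_mul, le_div_iff₀ hc]
  rwa [← div_eq_inv_mul, le_div_iff₀ hv', mul_comm] at this

theorem ColumnCombPos.exists_antilipschitzWith {W : Matrix ι ι ℝ} (hW : ColumnCombPos W) :
    ∃ K, AntilipschitzWith K (lcpMap W) := by
  obtain ⟨K, hK⟩ := exists_norm_le_mul_norm_mulVec isCompact_Icc (continuous_columnComb W)
    fun t ht => (hW t ht).ne'
  refine ⟨K, AntilipschitzWith.of_le_mul_dist fun a b => ?_⟩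
  obtain ⟨t, ht, hab⟩ := exists_lcpMap_sub_eq_columnComb_mulVec W a b
  rw [dist_eq_norm, dist_eq_norm, hab]
  exact hK t ht _

theorem lcpMap_cons_succ {N : ℕ} (M : Matrix (Fin (N + 1)) (Fin (N + 1)) ℝ) (s : ℝ)
    (x : Fin N → ℝ) (i : Fin N) :
    lcpMap M (Fin.cons s x) i.succ =
      lcpMap (M.submatrix Fin.succ Fin.succ) x i - M i.succ 0 * s⁻ := by
  simp only [lcpMap, Pi.sub_apply, Pi.posPart_apply, Pi.negPart_apply, Fin.cons_succ,
    Fin.cons_zero, mulVec, dotProduct, Fin.sum_univ_succ, submatrix_apply]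
  ring

theorem Fin.dist_cons_cons_le {α : Type*} [PseudoMetricSpace α] {N : ℕ} (a b : α)
    (x : Fin N → α) : dist (Fin.cons a x : Fin (N + 1) → α) (Fin.cons b x) ≤ dist a b :=
  (dist_pi_le_iff dist_nonneg).2 fun i => Fin.cases (by simp) (fun i => by simp) i

theorem ColumnCombPos.lcpMap_surjective_fin :
    ∀ {N : ℕ} {M : Matrix (Fin N) (Fin N) ℝ}, ColumnCombPos M → Surjective (lcpMap M)
  | 0, _, _ => fun _ => ⟨0, Subsingleton.elim _ _⟩
  | N + 1, M, hM => by
    set M' := M.submatrix Fin.succ Fin.succ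
    have hM' : ColumnCombPos M' := hM.submatrix_succ
    obtain ⟨K, hK⟩ := hM.exists_antilipschitzWith
    obtain ⟨K', hK'⟩ := hM'.exists_antilipschitzWith
    intro q
    choose x hx using fun s : ℝ =>
      hM'.lcpMap_surjective_fin (Fin.tail q + s⁻ • fun i => M i.succ 0)
    have hx_cont : Continuous x := by
      refine (hK'.isInducing (continuous_lcpMap M')).continuous_iff.2 ?_
      simp only [comp_def, hx]
      fun_prop
    set g : ℝ → ℝ := fun s => lcpMap M (Fin.cons s (x s)) 0
    have hcons : ∀ s, lcpMap M (Fin.cons s (x s)) = Fin.cons (g s) (Fin.tail q) := fun s => by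
      ext i
      refine Fin.cases rfl (fun i => ?_) i
      simp [lcpMap_cons_succ, M', hx, Fin.tail, mul_comm]
    have hg_cont : Continuous g :=
      (continuous_apply 0).comp ((continuous_lcpMap M).comp
        (Continuous.finCons (A := fun _ => ℝ) continuous_id hx_cont))
    have hg : AntilipschitzWith K g := AntilipschitzWith.of_le_mul_dist fun s s' =>
      calc dist s s' ≤ dist (Fin.cons s (x s) : Fin (N + 1) → ℝ) (Fin.cons s' (x s')) := by
            simpa using
              dist_le_pi_dist (Fin.cons s (x s) : Fin (N + 1) → ℝ) (Fin.cons s' (x s')) 0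
        _ ≤ K * dist (lcpMap M (Fin.cons s (x s))) (lcpMap M (Fin.cons s' (x s'))) :=
            hK.le_mul_dist _ _
        _ ≤ K * dist (g s) (g s') := by
            rw [hcons, hcons]
            exact mul_le_mul_of_nonneg_left (Fin.dist_cons_cons_le _ _ _) K.coe_nonneg
    obtain ⟨s, hs⟩ := hg_cont.surjective_of_antilipschitzWith hg (q 0)
    exact ⟨Fin.cons s (x s), by rw [hcons, hs, Fin.cons_self_tail]⟩

theorem ColumnCombPos.lcpMap_bijective {W : Matrix ι ι ℝ} (hW : ColumnCombPos W) :
    Bijective (lcpMap W) := by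
  obtain ⟨K, hK⟩ := hW.exists_antilipschitzWith
  refine ⟨hK.injective, fun q => ?_⟩
  let e := Fintype.equivFin ι
  obtain ⟨y, hy⟩ := (hW.reindex e).lcpMap_surjective_fin (q ∘ e.symm)
  refine ⟨y ∘ e, e.symm.surjective.injective_comp_right ?_⟩
  simpa [comp_assoc, ← hy] using (lcpMap_reindex e W (y ∘ e)).symm

theorem mulVec_add_mulVec_abs_eq_iff {R S : Matrix ι ι ℝ} (hRS : IsUnit (R + S)) (y f : ι → ℝ) :
    R *ᵥ y + S *ᵥ |y| = f ↔ lcpMap ((R + S)⁻¹ * (R - S)) y = (R + S)⁻¹ *ᵥ f := by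
  have hsplit : R *ᵥ y + S *ᵥ |y| = (R + S) *ᵥ y⁺ - (R - S) *ᵥ y⁻ := by
    calc R *ᵥ y + S *ᵥ |y| = R *ᵥ (y⁺ - y⁻) + S *ᵥ (y⁺ + y⁻) := by
          rw [posPart_sub_negPart, posPart_add_negPart]
      _ = (R + S) *ᵥ y⁺ - (R - S) *ᵥ y⁻ := by
          simp only [mulVec_sub, mulVec_add, add_mulVec, sub_mulVec]
          abel
  have hlcp : lcpMap ((R + S)⁻¹ * (R - S)) y =
      (R + S)⁻¹ *ᵥ ((R + S) *ᵥ y⁺ - (R - S) *ᵥ y⁻) := by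
    rw [mulVec_sub, mulVec_mulVec, mulVec_mulVec,
      nonsing_inv_mul _ ((isUnit_iff_isUnit_det _).1 hRS), one_mulVec, lcpMap]
  rw [hsplit, hlcp]
  exact (mulVec_injective_iff_isUnit.2 (isUnit_nonsing_inv_iff.2 hRS)).eq_iff.symm

end LCP

theorem vec_matAbs {n : ℕ} (Y : Matrix (Fin n) (Fin n) ℝ) : vec (matAbs Y) = |vec Y| := by
  ext
  simp [matAbs]

/-- With R = I ⊗ (AC⁻¹), S = I ⊗ B, if R+S is invertible and {I, (R+S)⁻¹(R−S)} has
the column W-property, then for every F the NGAVME AX + B|CX| = F has exactly one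
solution. -/
theorem ngavme_unique_of_columnW' {n : ℕ} (A B C : Matrix (Fin n) (Fin n) ℝ)
    (hC : IsUnit C)
    (hRS : IsUnit
      ((1 : Matrix (Fin n) (Fin n) ℝ) ⊗ₖ (A * C⁻¹) + (1 : Matrix (Fin n) (Fin n) ℝ) ⊗ₖ B))
    (h : ColumnWProperty
        (1 : Matrix (Fin n × Fin n) (Fin n × Fin n) ℝ)
        (((1 : Matrix (Fin n) (Fin n) ℝ) ⊗ₖ (A * C⁻¹) + (1 : Matrix (Fin n) (Fin n) ℝ) ⊗ₖ B)⁻¹ *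
          ((1 : Matrix (Fin n) (Fin n) ℝ) ⊗ₖ (A * C⁻¹) - (1 : Matrix (Fin n) (Fin n) ℝ) ⊗ₖ B))) :
    ∀ F : Matrix (Fin n) (Fin n) ℝ,
      ∃! X : Matrix (Fin n) (Fin n) ℝ, A * X + B * matAbs (C * X) = F := by
  intro F
  set R := (1 : Matrix (Fin n) (Fin n) ℝ) ⊗ₖ (A * C⁻¹)
  set S := (1 : Matrix (Fin n) (Fin n) ℝ) ⊗ₖ B
  have hvec : ∀ X, A * X + B * matAbs (C * X) = F ↔
      R *ᵥ vec (C * X) + S *ᵥ |vec (C * X)| = vec F := fun X => by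
    rw [← vec_inj, vec_add, ← vec_matAbs, ← vec_mul_eq_mulVec, ← vec_mul_eq_mulVec,
      Matrix.mul_assoc, nonsing_inv_mul_cancel_left _ _ ((isUnit_iff_isUnit_det _).1 hC)]
  have hbij : Bijective fun X => lcpMap ((R + S)⁻¹ * (R - S)) (vec (C * X)) :=
    h.columnCombPos.lcpMap_bijective.comp
      (vec_bijective.comp (IsUnit.isUnit_iff_mulLeft_bijective.1 hC))
  simpa only [hvec, mulVec_add_mulVec_abs_eq_iff hRS] using
    hbij.existsUnique ((R + S)⁻¹ *ᵥ vec F)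
end

section
/- Let A, B, C ∈ ℝ^{n×n} with C invertible, and set R = I ⊗ (AC⁻¹) and S = I ⊗ B in ℝ^{n²×n²}, where I is the n×n identity matrix and ⊗ is the Kronecker product. If for every pair of diagonal matrices F₁, F₂ ∈ ℝ^{n²×n²} with nonnegative diagonal entries and with all diagonal entries of F₁+F₂ strictly positive, the matrix (R+S)F₁ + (R−S)F₂ is invertible, then for every F ∈ ℝ^{n×n} the new generalized absolute value matrix equation AX + B|CX| = F has exactly one solution X ∈ ℝ^{n×n}. -/
open Matrix Kronecker

set_option linter.unusedSectionVars false
set_option maxHeartbeats 1000000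

section Aux
open Finset

variable {ι : Type*} [Fintype ι] [DecidableEq ι]

noncomputable def maskAbs (Z : Finset ι) (y : ι → ℝ) : ι → ℝ :=
  fun i => if i ∈ Z then |y i| else 0

lemma helper_mulVec (M S : Matrix ι ι ℝ) (d v : ι → ℝ) :
    (M + S * Matrix.diagonal d) *ᵥ v = M *ᵥ v + S *ᵥ (fun i => d i * v i) := by
  rw [Matrix.add_mulVec, ← Matrix.mulVec_mulVec]
  congr 1
  funext i
  simp [Matrix.mulVec, Matrix.diagonal, dotProduct, ite_mul]

lemma slope_exists (Z : Finset ι) (y x : ι → ℝ) :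
    ∃ D : ι → ℝ, (∀ i, |D i| ≤ 1) ∧ (∀ i ∉ Z, D i = 0) ∧
      (∀ i, D i * (y i - x i) = maskAbs Z y i - maskAbs Z x i) := by
  refine ⟨fun i => if i ∈ Z then (if y i = x i then 0 else (|y i| - |x i|) / (y i - x i)) else 0,
    fun i => ?_, fun i hi => by simp [hi], fun i => ?_⟩
  · dsimp only
    split
    · split
      · simp
      · rename_i hne
        rw [abs_div, div_le_one (abs_pos.mpr (sub_ne_zero_of_ne hne))]
        exact abs_abs_sub_abs_le_abs_sub _ _
    · simp
  · dsimp only [maskAbs]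
    split
    · split
      · rename_i he; simp [he]
      · rename_i hne
        rw [div_mul_cancel₀]
        exact sub_ne_zero_of_ne hne
    · simp

lemma mulVec_norm_le (A : Matrix ι ι ℝ) (x : ι → ℝ) :
    ‖A *ᵥ x‖ ≤ (∑ i, ∑ j, |A i j|) * ‖x‖ := by
  have hnn : (0:ℝ) ≤ (∑ i, ∑ j, |A i j|) * ‖x‖ := by positivity
  rw [pi_norm_le_iff_of_nonneg hnn]
  intro i
  calc ‖(A *ᵥ x) i‖ = |∑ j, A i j * x j| := by simp [Matrix.mulVec, dotProduct]
    _ ≤ ∑ j, |A i j * x j| := Finset.abs_sum_le_sum_abs (fun j => A i j * x j) Finset.univ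
    _ ≤ ∑ j, |A i j| * ‖x‖ := by
        refine Finset.sum_le_sum fun j _ => ?_
        rw [abs_mul]
        exact mul_le_mul_of_nonneg_left (norm_le_pi_norm x j) (abs_nonneg _)
    _ = (∑ j, |A i j|) * ‖x‖ := by rw [Finset.sum_mul]
    _ ≤ (∑ i, ∑ j, |A i j|) * ‖x‖ := by
        refine mul_le_mul_of_nonneg_right ?_ (norm_nonneg _)
        exact Finset.single_le_sum (f := fun k => ∑ j, |A k j|)
          (fun k _ => Finset.sum_nonneg fun j _ => abs_nonneg _) (Finset.mem_univ i)


lemma exists_expansion_const (Z : Finset ι) (M S : Matrix ι ι ℝ)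
    (h : ∀ d : ι → ℝ, (∀ i, |d i| ≤ 1) → (∀ i ∉ Z, d i = 0) →
      IsUnit (M + S * Matrix.diagonal d)) :
    ∃ c : ℝ, 0 ≤ c ∧ ∀ d : ι → ℝ, (∀ i, |d i| ≤ 1) → (∀ i ∉ Z, d i = 0) →
      ∀ w : ι → ℝ, ‖w‖ ≤ c * ‖(M + S * Matrix.diagonal d) *ᵥ w‖ := by
  classical
  set mask : (ι → ℝ) → (ι → ℝ) := fun d i => if i ∈ Z then d i else 0 with hmask
  set A : (ι → ℝ) → Matrix ι ι ℝ := fun d => M + S * Matrix.diagonal (mask d) with hA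
  set cube : Set (ι → ℝ) := Set.univ.pi (fun _ => Set.Icc (-1:ℝ) 1) with hcube
  have hcc : IsCompact cube := isCompact_univ_pi fun _ => isCompact_Icc
  have hne : cube.Nonempty := ⟨fun _ => 0, fun i _ => by norm_num⟩
  -- properties of mask d for d in cube
  have hmaskgood : ∀ d ∈ cube, (∀ i, |mask d i| ≤ 1) ∧ (∀ i ∉ Z, mask d i = 0) := by
    intro d hd
    constructor
    · intro i
      dsimp [mask]
      split
      · have := hd i (Set.mem_univ i)
        rw [abs_le]; exact ⟨this.1, this.2⟩
      · simp
    · intro i hi; simp [mask, hi]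
  have hAunit : ∀ d ∈ cube, IsUnit (A d) := fun d hd =>
    h _ (hmaskgood d hd).1 (hmaskgood d hd).2
  have hAdet : ∀ d ∈ cube, (A d).det ≠ 0 := by
    intro d hd
    exact ((Matrix.isUnit_iff_isUnit_det _).mp (hAunit d hd)).ne_zero
  -- continuity
  have hAcont : Continuous A := by
    apply continuous_const.add
    apply continuous_const.matrix_mul
    apply Continuous.matrix_diagonal
    apply continuous_pi
    intro i
    dsimp [mask]
    split
    · exact continuous_apply i
    · exact continuous_const
  set φ : (ι → ℝ) → ℝ := fun d => ∑ i, ∑ j, |((A d)⁻¹) i j| with hφ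
  have hφcont : ContinuousOn φ cube := by
    apply continuousOn_finset_sum
    intro i _
    apply continuousOn_finset_sum
    intro j _
    have h1 : ContinuousOn (fun d => ((A d).det)⁻¹ * (A d).adjugate i j) cube := by
      apply ContinuousOn.mul
      · exact (hAcont.matrix_det.continuousOn).inv₀ hAdet
      · exact ((hAcont.matrix_adjugate).matrix_elem i j).continuousOn
    have h2 : ∀ d ∈ cube, ((A d)⁻¹) i j = ((A d).det)⁻¹ * (A d).adjugate i j := by
      intro d hd
      rw [Matrix.inv_def, Ring.inverse_eq_inv']
      simp [Matrix.smul_apply]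
    exact (h1.congr h2).abs
  obtain ⟨d₀, hd₀, hmax⟩ := hcc.exists_isMaxOn hne hφcont
  refine ⟨max (φ d₀) 0, le_max_right _ _, ?_⟩
  intro d hd1 hd2 w
  have hdc : d ∈ cube := by
    intro i _
    have := hd1 i
    rw [abs_le] at this
    exact ⟨this.1, this.2⟩
  have hdm : mask d = d := by
    funext i
    dsimp [mask]
    split
    · rfl
    · rename_i hi; exact (hd2 i hi).symm
  have hMd : M + S * Matrix.diagonal d = A d := by rw [hA]; dsimp only; rw [hdm]
  rw [hMd]
  have hdet := (Matrix.isUnit_iff_isUnit_det _).mp (hAunit d hdc)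
  have hw : w = (A d)⁻¹ *ᵥ ((A d) *ᵥ w) := by
    rw [Matrix.mulVec_mulVec, Matrix.nonsing_inv_mul _ hdet, Matrix.one_mulVec]
  calc ‖w‖ = ‖(A d)⁻¹ *ᵥ ((A d) *ᵥ w)‖ := by rw [← hw]
    _ ≤ φ d * ‖(A d) *ᵥ w‖ := mulVec_norm_le _ _
    _ ≤ max (φ d₀) 0 * ‖(A d) *ᵥ w‖ := by
        apply mul_le_mul_of_nonneg_right _ (norm_nonneg _)
        exact le_max_of_le_left (hmax hdc)
    _ = _ := rfl

lemma core_exists (Z : Finset ι) :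
    ∀ M S : Matrix ι ι ℝ,
      (∀ d : ι → ℝ, (∀ i, |d i| ≤ 1) → (∀ i ∉ Z, d i = 0) →
        IsUnit (M + S * Matrix.diagonal d)) →
      ∀ f : ι → ℝ, ∃ y, M *ᵥ y + S *ᵥ maskAbs Z y = f := by
  classical
  induction Z using Finset.induction_on with
  | empty =>
      intro M S h f
      have hM : IsUnit M := by
        have := h (fun _ => 0) (fun i => by simp) (fun i _ => rfl)
        have h0 : Matrix.diagonal (fun _ => (0:ℝ)) = (0 : Matrix ι ι ℝ) := Matrix.diagonal_zero
        rw [h0, mul_zero, add_zero] at this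
        exact this
      have hdet := (Matrix.isUnit_iff_isUnit_det _).mp hM
      refine ⟨M⁻¹ *ᵥ f, ?_⟩
      have : maskAbs (∅ : Finset ι) (M⁻¹ *ᵥ f) = 0 := by
        funext i; simp [maskAbs]
      rw [this, Matrix.mulVec_zero, add_zero, Matrix.mulVec_mulVec,
        Matrix.mul_nonsing_inv _ hdet, Matrix.one_mulVec]
  | @insert z Z' hz ih =>
      intro M S h f
      -- the one-parameter family of "linearized at z" problems
      set dt : ℝ → ι → ℝ := fun t i => if i = z then t else 0 with hdt
      have hcomb : ∀ t : ℝ, |t| ≤ 1 → ∀ d' : ι → ℝ, (∀ i, |d' i| ≤ 1) →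
          (∀ i ∉ Z', d' i = 0) → (∀ i, |(dt t + d') i| ≤ 1) ∧
            (∀ i ∉ insert z Z', (dt t + d') i = 0) := by
        intro t ht d' h1 h2
        constructor
        · intro i
          by_cases hiz : i = z
          · rw [hiz]
            have hd'z : d' z = 0 := h2 z hz
            simp [dt, hd'z, ht]
          · simp [dt, hiz, h1 i]
        · intro i hi
          rw [Finset.mem_insert] at hi
          push_neg at hi
          simp [dt, hi.1, h2 i hi.2]
      have h' : ∀ t : ℝ, |t| ≤ 1 →
          ∀ d' : ι → ℝ, (∀ i, |d' i| ≤ 1) → (∀ i ∉ Z', d' i = 0) →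
            IsUnit ((M + S * Matrix.diagonal (dt t)) + S * Matrix.diagonal d') := by
        intro t ht d' h1 h2
        have : (M + S * Matrix.diagonal (dt t)) + S * Matrix.diagonal d'
            = M + S * Matrix.diagonal (dt t + d') := by
          rw [show dt t + d' = (fun i => dt t i + d' i) from rfl,
            ← Matrix.diagonal_add, mul_add, add_assoc]
        rw [this]
        exact h _ (hcomb t ht d' h1 h2).1 (hcomb t ht d' h1 h2).2
      obtain ⟨c, hc0, hc⟩ := exists_expansion_const (insert z Z') M S h
      have hex : ∀ t : ℝ, |t| ≤ 1 → ∃ y,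
          (M + S * Matrix.diagonal (dt t)) *ᵥ y + S *ᵥ maskAbs Z' y = f :=
        fun t ht => ih (M + S * Matrix.diagonal (dt t)) S (h' t ht) f
      set g : ℝ → ι → ℝ := fun t => if ht : |t| ≤ 1 then (hex t ht).choose else 0 with hg
      have gspec : ∀ t (ht : |t| ≤ 1),
          (M + S * Matrix.diagonal (dt t)) *ᵥ g t + S *ᵥ maskAbs Z' (g t) = f := by
        intro t ht
        simp only [hg, dif_pos ht]
        exact (hex t ht).choose_spec
      -- rewrite the equation in combined-diagonal form against another point
      have key : ∀ t, |t| ≤ 1 → ∀ s, |s| ≤ 1 → ∃ d : ι → ℝ,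
          (∀ i, |d i| ≤ 1) ∧ (∀ i ∉ insert z Z', d i = 0) ∧
          (M + S * Matrix.diagonal d) *ᵥ (g t - g s)
            = S *ᵥ (fun i => (dt s i - dt t i) * g s i) := by
        intro t ht s hs
        obtain ⟨D, hD1, hD2, hD3⟩ := slope_exists Z' (g t) (g s)
        refine ⟨dt t + D, (hcomb t ht D hD1 hD2).1, (hcomb t ht D hD1 hD2).2, ?_⟩
        have e1 := gspec t ht
        have e2 := gspec s hs
        rw [helper_mulVec] at e1 e2 ⊢
        have hv : (fun i => (dt t + D) i * (g t - g s) i)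
            = (fun i => dt t i * g t i) + maskAbs Z' (g t)
              - ((fun i => dt s i * g s i) + maskAbs Z' (g s))
              + (fun i => (dt s i - dt t i) * g s i) := by
          funext i
          simp only [Pi.add_apply, Pi.sub_apply]
          linear_combination hD3 i
        rw [hv]
        simp only [Matrix.mulVec_add, Matrix.mulVec_sub]
        linear_combination e1 - e2
      -- norm bound on solutions
      have hbound : ∀ t, |t| ≤ 1 → ‖g t‖ ≤ c * ‖f‖ := by
        intro t ht
        obtain ⟨D, hD1, hD2, hD3⟩ := slope_exists Z' (g t) 0
        have e1 := gspec t ht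
        have heq : (M + S * Matrix.diagonal (dt t + D)) *ᵥ g t = f := by
          rw [helper_mulVec]
          have hv : (fun i => (dt t + D) i * g t i)
              = (fun i => dt t i * g t i) + maskAbs Z' (g t) := by
            funext i
            have h3 := hD3 i
            simp only [Pi.sub_apply, Pi.zero_apply, sub_zero, maskAbs] at h3
            simp only [Pi.add_apply, maskAbs]
            have : maskAbs Z' (0 : ι → ℝ) i = 0 := by simp [maskAbs]
            rw [add_mul, h3]
            simp [maskAbs]
          rw [hv, Matrix.mulVec_add, ← add_assoc]
          rw [helper_mulVec] at e1
          exact e1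
        calc ‖g t‖ ≤ c * ‖(M + S * Matrix.diagonal (dt t + D)) *ᵥ g t‖ :=
              hc _ (hcomb t ht D hD1 hD2).1 (hcomb t ht D hD1 hD2).2 _
          _ = c * ‖f‖ := by rw [heq]
      -- Lipschitz estimate
      set bS : ℝ := ∑ i, ∑ j, |S i j| with hbS
      have hbS0 : 0 ≤ bS := Finset.sum_nonneg fun i _ => Finset.sum_nonneg fun j _ => abs_nonneg _
      set L : ℝ := c * (bS * (c * ‖f‖)) with hL
      have hL0 : 0 ≤ L := by positivity
      have hlip : ∀ t ∈ Set.Icc (-1:ℝ) 1, ∀ s ∈ Set.Icc (-1:ℝ) 1,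
          ‖g t - g s‖ ≤ L * |t - s| := by
        intro t ht' s hs'
        have ht : |t| ≤ 1 := abs_le.mpr ⟨ht'.1, ht'.2⟩
        have hs : |s| ≤ 1 := abs_le.mpr ⟨hs'.1, hs'.2⟩
        obtain ⟨d, hd1, hd2, hd3⟩ := key t ht s hs
        have hvec : ‖(fun i => (dt s i - dt t i) * g s i)‖ ≤ |t - s| * ‖g s‖ := by
          rw [pi_norm_le_iff_of_nonneg (by positivity)]
          intro i
          by_cases hiz : i = z
          · rw [hiz]
            simp only [dt, if_pos rfl]
            rw [Real.norm_eq_abs, abs_mul]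
            have h1 : |s - t| = |t - s| := abs_sub_comm s t
            rw [h1]
            exact mul_le_mul_of_nonneg_left (norm_le_pi_norm (g s) z) (abs_nonneg _)
          · have h0 : dt s i - dt t i = 0 := by simp [dt, hiz]
            rw [h0, zero_mul, norm_zero]
            positivity
        calc ‖g t - g s‖ ≤ c * ‖(M + S * Matrix.diagonal d) *ᵥ (g t - g s)‖ :=
              hc d hd1 hd2 _
          _ = c * ‖S *ᵥ (fun i => (dt s i - dt t i) * g s i)‖ := by rw [hd3]
          _ ≤ c * (bS * ‖(fun i => (dt s i - dt t i) * g s i)‖) := by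
              apply mul_le_mul_of_nonneg_left _ hc0
              exact mulVec_norm_le S _
          _ ≤ c * (bS * (|t - s| * ‖g s‖)) := by
              apply mul_le_mul_of_nonneg_left _ hc0
              exact mul_le_mul_of_nonneg_left hvec hbS0
          _ ≤ c * (bS * (|t - s| * (c * ‖f‖))) := by
              apply mul_le_mul_of_nonneg_left _ hc0
              apply mul_le_mul_of_nonneg_left _ hbS0
              exact mul_le_mul_of_nonneg_left (hbound s hs) (abs_nonneg _)
          _ = L * |t - s| := by rw [hL]; ring
      -- continuity of the z-coordinate
      have hcont : ContinuousOn (fun t => g t z) (Set.Icc (-1:ℝ) 1) := by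
        apply LipschitzOnWith.continuousOn (K := L.toNNReal)
        apply LipschitzOnWith.of_dist_le_mul
        intro t ht s hs
        have h1 : dist (g t z) (g s z) ≤ ‖g t - g s‖ := by
          rw [Real.dist_eq]
          have := norm_le_pi_norm (g t - g s) z
          simpa [Matrix.diagonal_zero] using this
        calc dist (g t z) (g s z) ≤ ‖g t - g s‖ := h1
          _ ≤ L * |t - s| := hlip t ht s hs
          _ = ↑L.toNNReal * dist t s := by
              rw [Real.coe_toNNReal L hL0, Real.dist_eq]
      -- bridge: a solution of the t-problem with |y z| = t * y z solves the full problem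
      have bridge : ∀ t, |t| ≤ 1 → |g t z| = t * g t z →
          M *ᵥ g t + S *ᵥ maskAbs (insert z Z') (g t) = f := by
        intro t ht habs
        have e1 := gspec t ht
        rw [helper_mulVec] at e1
        have hm : maskAbs (insert z Z') (g t)
            = maskAbs Z' (g t) + fun i => dt t i * g t i := by
          funext i
          by_cases hiz : i = z
          · subst hiz
            simp [maskAbs, hz, dt, habs]
          · simp [maskAbs, hiz, dt, Finset.mem_insert]
        rw [hm, Matrix.mulVec_add]
        linear_combination e1
      -- case analysis
      by_cases hpos : 0 ≤ g 1 z
      · refine ⟨g 1, bridge 1 (by norm_num) ?_⟩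
        rw [abs_of_nonneg hpos, one_mul]
      · by_cases hneg : g (-1) z ≤ 0
        · refine ⟨g (-1), bridge (-1) (by norm_num) ?_⟩
          rw [abs_of_nonpos hneg, neg_one_mul]
        · push_neg at hpos hneg
          have hiv := intermediate_value_Icc' (by norm_num : (-1:ℝ) ≤ 1) hcont
          have h0 : (0:ℝ) ∈ Set.Icc (g 1 z) (g (-1) z) := ⟨le_of_lt hpos, le_of_lt hneg⟩
          obtain ⟨t₀, ht₀mem, ht₀⟩ := hiv h0
          have ht₀1 : |t₀| ≤ 1 := abs_le.mpr ⟨ht₀mem.1, ht₀mem.2⟩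
          refine ⟨g t₀, bridge t₀ ht₀1 ?_⟩
          have ht₀' : g t₀ z = 0 := ht₀
          rw [ht₀']
          simp

lemma core_unique (Z : Finset ι) (M S : Matrix ι ι ℝ)
    (h : ∀ d : ι → ℝ, (∀ i, |d i| ≤ 1) → (∀ i ∉ Z, d i = 0) →
      IsUnit (M + S * Matrix.diagonal d))
    (y x : ι → ℝ)
    (hyx : M *ᵥ y + S *ᵥ maskAbs Z y = M *ᵥ x + S *ᵥ maskAbs Z x) : y = x := by
  obtain ⟨D, hD1, hD2, hD3⟩ := slope_exists Z y x
  have hu := h D hD1 hD2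
  have heq : (M + S * Matrix.diagonal D) *ᵥ (y - x) = 0 := by
    rw [helper_mulVec]
    have hv : (fun i => D i * (y - x) i) = maskAbs Z y - maskAbs Z x := by
      funext i
      simp only [Pi.sub_apply]
      exact hD3 i
    rw [hv, Matrix.mulVec_sub, Matrix.mulVec_sub]
    linear_combination hyx
  have hdet := (Matrix.isUnit_iff_isUnit_det _).mp hu
  have hz : y - x = 0 := by
    have h2 := congrArg (fun v => (M + S * Matrix.diagonal D)⁻¹ *ᵥ v) heq
    simpa [Matrix.mulVec_mulVec, Matrix.nonsing_inv_mul _ hdet, Matrix.one_mulVec,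
      Matrix.mulVec_zero] using h2
  exact sub_eq_zero.mp hz

lemma kron_one_mulVec {n : ℕ} (Q : Matrix (Fin n) (Fin n) ℝ) (X : Matrix (Fin n) (Fin n) ℝ) :
    ((1 : Matrix (Fin n) (Fin n) ℝ) ⊗ₖ Q) *ᵥ (fun p => X p.2 p.1)
      = fun p => (Q * X) p.2 p.1 := by
  funext p
  simp [Matrix.mulVec, dotProduct, Fintype.sum_prod_type, Matrix.kroneckerMap_apply,
    Matrix.one_apply, Matrix.mul_apply, ite_mul, Finset.sum_ite_eq]


end Aux

/-- With R = I ⊗ (AC⁻¹), S = I ⊗ B, if (R+S)F₁ + (R−S)F₂ is invertible for all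
nonnegative diagonal matrices F₁, F₂ with diag(F₁+F₂) > 0, then for every F the
NGAVME AX + B|CX| = F has exactly one solution. -/
theorem ngavme_unique_of_diag_invertible {n : ℕ} (A B C : Matrix (Fin n) (Fin n) ℝ)
    (hC : IsUnit C)
    (h : ∀ d₁ d₂ : Fin n × Fin n → ℝ, (∀ i, 0 ≤ d₁ i) → (∀ i, 0 ≤ d₂ i) →
      (∀ i, 0 < d₁ i + d₂ i) →
      IsUnit
        (((1 : Matrix (Fin n) (Fin n) ℝ) ⊗ₖ (A * C⁻¹) + (1 : Matrix (Fin n) (Fin n) ℝ) ⊗ₖ B) *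
            Matrix.diagonal d₁ +
          ((1 : Matrix (Fin n) (Fin n) ℝ) ⊗ₖ (A * C⁻¹) - (1 : Matrix (Fin n) (Fin n) ℝ) ⊗ₖ B) *
            Matrix.diagonal d₂)) :
    ∀ F : Matrix (Fin n) (Fin n) ℝ,
      ∃! X : Matrix (Fin n) (Fin n) ℝ, A * X + B * matAbs (C * X) = F := by
  intro F
  classical
  set M : Matrix (Fin n × Fin n) (Fin n × Fin n) ℝ :=
    (1 : Matrix (Fin n) (Fin n) ℝ) ⊗ₖ (A * C⁻¹) with hM
  set S : Matrix (Fin n × Fin n) (Fin n × Fin n) ℝ :=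
    (1 : Matrix (Fin n) (Fin n) ℝ) ⊗ₖ B with hS
  have hCdet := (Matrix.isUnit_iff_isUnit_det C).mp hC
  have hCC : C * C⁻¹ = 1 := Matrix.mul_nonsing_inv _ hCdet
  have hCC' : C⁻¹ * C = 1 := Matrix.nonsing_inv_mul _ hCdet
  -- the combined-diagonal invertibility hypothesis
  have key : ∀ d : Fin n × Fin n → ℝ, (∀ i, |d i| ≤ 1) → (∀ i ∉ (Finset.univ : Finset (Fin n × Fin n)), d i = 0) →
      IsUnit (M + S * Matrix.diagonal d) := by
    intro d hd _
    have h₁ : ∀ i, (0:ℝ) ≤ (1 + d i) / 2 := fun i => by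
      have := abs_le.mp (hd i); linarith
    have h₂ : ∀ i, (0:ℝ) ≤ (1 - d i) / 2 := fun i => by
      have := abs_le.mp (hd i); linarith
    have h₃ : ∀ i, (0:ℝ) < (1 + d i) / 2 + (1 - d i) / 2 := fun i => by linarith
    have hu := h (fun i => (1 + d i) / 2) (fun i => (1 - d i) / 2) h₁ h₂ h₃
    have he : (M + S) * Matrix.diagonal (fun i => (1 + d i) / 2)
        + (M - S) * Matrix.diagonal (fun i => (1 - d i) / 2) = M + S * Matrix.diagonal d := by
      ext i j
      simp only [Matrix.add_apply, Matrix.sub_apply, Matrix.mul_diagonal]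
      ring
    rw [← he]
    exact hu
  -- vectorization correspondence
  have hvecM : ∀ Y : Matrix (Fin n) (Fin n) ℝ,
      M *ᵥ (fun p => Y p.2 p.1) = fun p => ((A * C⁻¹) * Y) p.2 p.1 := fun Y =>
    kron_one_mulVec (A * C⁻¹) Y
  have hvecS : ∀ Y : Matrix (Fin n) (Fin n) ℝ,
      S *ᵥ (fun p => Y p.2 p.1) = fun p => (B * Y) p.2 p.1 := fun Y =>
    kron_one_mulVec B Y
  have hmask : ∀ Y : Matrix (Fin n) (Fin n) ℝ,
      maskAbs (Finset.univ : Finset (Fin n × Fin n)) (fun p => Y p.2 p.1)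
        = fun p => (matAbs Y) p.2 p.1 := by
    intro Y
    funext p
    simp [maskAbs, matAbs]
  -- characterization: matrix equation for Y iff vector equation for vec Y
  have hiff : ∀ Y : Matrix (Fin n) (Fin n) ℝ,
      ((A * C⁻¹) * Y + B * matAbs Y = F) ↔
        (M *ᵥ (fun p => Y p.2 p.1) + S *ᵥ maskAbs Finset.univ (fun p => Y p.2 p.1)
          = fun p => F p.2 p.1) := by
    intro Y
    rw [hmask, hvecM, hvecS]
    constructor
    · intro hY
      funext p
      have := congrFun (congrFun hY p.2) p.1
      simpa using this
    · intro hY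
      ext a b
      have := congrFun hY (b, a)
      simpa using this
  -- existence
  obtain ⟨y, hy⟩ := core_exists Finset.univ M S key (fun p => F p.2 p.1)
  set Y : Matrix (Fin n) (Fin n) ℝ := fun a b => y (b, a) with hY
  have hyY : (fun p : Fin n × Fin n => Y p.2 p.1) = y := by funext p; simp [hY]
  have hYeq : (A * C⁻¹) * Y + B * matAbs Y = F := by
    rw [hiff Y, hyY]
    exact hy
  set X : Matrix (Fin n) (Fin n) ℝ := C⁻¹ * Y with hX
  have hCX : C * X = Y := by rw [hX, ← mul_assoc, hCC, one_mul]
  have hXsol : A * X + B * matAbs (C * X) = F := by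
    rw [hCX, hX, ← mul_assoc]
    exact hYeq
  refine ⟨X, hXsol, ?_⟩
  intro X' hX'
  set Y' : Matrix (Fin n) (Fin n) ℝ := C * X' with hY'
  have hX'e : C⁻¹ * Y' = X' := by rw [hY', ← mul_assoc, hCC', one_mul]
  have hY'eq : (A * C⁻¹) * Y' + B * matAbs Y' = F := by
    rw [mul_assoc, hX'e]
    exact hX'
  have hvec' := (hiff Y').mp hY'eq
  have hvec := (hiff Y).mp hYeq
  have : (fun p : Fin n × Fin n => Y' p.2 p.1) = (fun p : Fin n × Fin n => Y p.2 p.1) := by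
    apply core_unique Finset.univ M S key
    rw [hvec', hvec]
  have hYY : Y' = Y := by
    ext a b
    exact congrFun this (b, a)
  rw [← hX'e, hYY, ← hX]
end

section
/- Let A, B, C ∈ ℝ^{n×n} with A and C invertible. If for every diagonal matrix D = diag(d₁,…,d_{n²}) ∈ ℝ^{n²×n²} with dᵢ ∈ [−1,1] the spectral radius satisfies ρ((I ⊗ (CA⁻¹B))D) < 1, where I is the n×n identity matrix and ⊗ is the Kronecker product, then for every F ∈ ℝ^{n×n} the new generalized absolute value matrix equation AX + B|CX| = F has exactly one solution X ∈ ℝ^{n×n}. -/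
/-!
After the substitution `Y = C X` and vectorisation, the NGAVME becomes the absolute value
equation `y + K |y| = g` with `K = I ⊗ (C A⁻¹ B)`. The spectral hypothesis makes every
`I + K D`, `D` diagonal with entries in `[-1, 1]`, nonsingular, and by compactness uniformly
so: `‖x‖ ≤ c ‖x + K D x‖`. Since `|x| - |y| = E (x - y)` for such a diagonal `E`, every
map `y ↦ y + t K |y|` with `|t| ≤ 1` is antilipschitz with constant `c`. Surjectivity is
carried from `t = 0` to `t = 1` by a contraction argument in steps short enough that
`(s - t) K |·|` is a small Lipschitz perturbation.
-/

open Matrix Kronecker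

open scoped NNReal

theorem abs_le_specRad_of_mulVec_eq_smul {m : Type*} [Fintype m] [DecidableEq m]
    (K : Matrix m m ℝ) {v : m → ℝ} (hv : v ≠ 0) {μ : ℝ} (h : K *ᵥ v = μ • v) :
    |μ| ≤ specRad K := by
  have hmem : (μ : ℂ) ∈ spectrum ℂ (K.map Complex.ofReal) := by
    rw [← Matrix.spectrum_toLin']
    refine Module.End.HasEigenvalue.mem_spectrum
      (Module.End.hasEigenvalue_of_hasEigenvector (x := Complex.ofReal ∘ v) ⟨?_, ?_⟩)
    · rw [Module.End.mem_eigenspace_iff, Matrix.toLin'_apply]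
      ext i
      have := RingHom.map_mulVec Complex.ofRealHom K v i
      rw [h] at this
      exact this.symm.trans (by simp)
    · simpa [funext_iff] using hv
  exact le_csSup ((Matrix.finite_spectrum _).image _).bddAbove ⟨μ, hmem, by simp⟩

theorem eq_zero_of_add_mulVec_mul_eq_zero_of_specRad_lt_one {m : Type*} [Fintype m]
    [DecidableEq m] {K : Matrix m m ℝ} {d x : m → ℝ} (hK : specRad (K * diagonal d) < 1)
    (hx : x + K *ᵥ (d * x) = 0) : x = 0 := by
  by_contra hx0
  have heig : (K * diagonal d) *ᵥ x = (-1 : ℝ) • x := by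
    rw [← mulVec_mulVec, neg_one_smul, add_eq_zero_iff_neg_eq.1 hx]
    exact congrArg _ (funext (mulVec_diagonal d x))
  have := abs_le_specRad_of_mulVec_eq_smul _ hx0 heig
  norm_num at this
  linarith

theorem AntilipschitzWith.surjective_add_of_lipschitzWith {E : Type*} [NormedAddCommGroup E]
    [CompleteSpace E] {f g : E → E} {Kf Kg : ℝ≥0} (hf : AntilipschitzWith Kf f)
    (hfs : Function.Surjective f) (hg : LipschitzWith Kg g) (hK : Kf * Kg < 1) :
    Function.Surjective (f + g) := by
  intro b
  have : Nonempty E := ⟨b⟩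
  -- a solution of `f x + g x = b` is a fixed point of the contraction `x ↦ f⁻¹ (b - g x)`
  set T : E → E := fun x => Function.surjInv hfs (b - g x)
  have hT : ContractingWith (Kf * Kg) T :=
    ⟨hK, (hf.to_rightInverse (Function.rightInverse_surjInv hfs)).comp
      (LipschitzWith.of_dist_le_mul fun x y => by
        rw [dist_sub_left]; exact hg.dist_le_mul x y)⟩
  refine ⟨ContractingWith.fixedPoint T hT, ?_⟩
  have hfix := hT.fixedPoint_isFixedPt
  rw [Pi.add_apply, ← eq_sub_iff_add_eq]
  conv_lhs => rw [← hfix]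
  exact Function.surjInv_eq hfs _

theorem exists_norm_le_one_abs_sub_abs_eq_mul {ι : Type*} [Fintype ι] (x y : ι → ℝ) :
    ∃ e : ι → ℝ, ‖e‖ ≤ 1 ∧ |x| - |y| = e * (x - y) := by
  refine ⟨fun i => (|x i| - |y i|) / (x i - y i), ?_, ?_⟩
  · refine (pi_norm_le_iff_of_nonneg zero_le_one).2 fun i => ?_
    rw [Real.norm_eq_abs, abs_div]
    exact div_le_one_of_le₀ (abs_abs_sub_abs_le_abs_sub _ _) (abs_nonneg _)
  · ext i
    by_cases hi : x i = y i
    · simp [hi]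
    · exact (div_mul_cancel₀ _ (sub_ne_zero.2 hi)).symm

theorem lipschitzWith_one_abs_pi {ι : Type*} [Fintype ι] :
    LipschitzWith 1 fun x : ι → ℝ => |x| := by
  refine LipschitzWith.of_dist_le_mul fun x y => ?_
  obtain ⟨e, he, hxy⟩ := exists_norm_le_one_abs_sub_abs_eq_mul x y
  rw [dist_eq_norm, dist_eq_norm, hxy, NNReal.coe_one, one_mul]
  exact (norm_mul_le _ _).trans (mul_le_of_le_one_left (norm_nonneg _) he)

section AbsoluteValueEquation

variable {ι : Type*} [Fintype ι] (K : Matrix ι ι ℝ)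

theorem exists_norm_le_mul_norm_add_mulVec_mul
    (hK : ∀ d : ι → ℝ, ‖d‖ ≤ 1 → ∀ x, x + K *ᵥ (d * x) = 0 → x = 0) :
    ∃ C : ℝ≥0, ∀ d : ι → ℝ, ‖d‖ ≤ 1 → ∀ x, ‖x‖ ≤ C * ‖x + K *ᵥ (d * x)‖ := by
  have hS := (isCompact_closedBall (0 : ι → ℝ) 1).prod (isCompact_sphere (0 : ι → ℝ) 1)
  obtain ⟨c, hc, hcle⟩ := hS.exists_forall_le' (f := fun p => ‖p.2 + K *ᵥ (p.1 * p.2)‖)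
    (a := 0) (by fun_prop) fun p hp => by
      refine norm_pos_iff.2 fun h => ?_
      have := hK p.1 (mem_closedBall_zero_iff.1 hp.1) p.2 h
      simpa [this] using hp.2
  refine ⟨(⟨c⁻¹, by positivity⟩ : ℝ≥0), fun d hd x => ?_⟩
  rcases eq_or_ne x 0 with rfl | hx
  · simp
  have hx' : 0 < ‖x‖ := norm_pos_iff.2 hx
  have := hcle (d, ‖x‖⁻¹ • x) ⟨mem_closedBall_zero_iff.2 hd, by simp [norm_smul, hx]⟩
  simp only [mul_smul_comm, mulVec_smul, ← smul_add, norm_smul, norm_inv, norm_norm] at this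
  show ‖x‖ ≤ c⁻¹ * _
  rw [le_inv_mul_iff₀ hc, mul_comm]
  rwa [le_inv_mul_iff₀ hx'] at this

theorem exists_antilipschitzWith_add_smul_mulVec_abs
    (hK : ∀ d : ι → ℝ, ‖d‖ ≤ 1 → ∀ x, x + K *ᵥ (d * x) = 0 → x = 0) :
    ∃ C : ℝ≥0, ∀ t : ℝ, |t| ≤ 1 →
      AntilipschitzWith C fun y : ι → ℝ => y + t • (K *ᵥ |y|) := by
  obtain ⟨C, hC⟩ := exists_norm_le_mul_norm_add_mulVec_mul K hK
  refine ⟨C, fun t ht => AntilipschitzWith.of_le_mul_dist fun x y => ?_⟩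
  obtain ⟨e, he, hxy⟩ := exists_norm_le_one_abs_sub_abs_eq_mul x y
  have hdiff : x + t • (K *ᵥ |x|) - (y + t • (K *ᵥ |y|)) =
      (x - y) + K *ᵥ ((t • e) * (x - y)) := by
    rw [smul_mul_assoc, ← hxy, mulVec_smul, mulVec_sub, smul_sub]
    abel
  rw [dist_eq_norm, dist_eq_norm, hdiff]
  refine hC _ ?_ _
  calc ‖t • e‖ = |t| * ‖e‖ := by rw [norm_smul, Real.norm_eq_abs]
    _ ≤ 1 * 1 := by gcongr
    _ = 1 := one_mul 1

theorem exists_lipschitzWith_mulVec_abs :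
    ∃ L : ℝ≥0, LipschitzWith L fun y : ι → ℝ => K *ᵥ |y| := by
  classical
  exact ⟨_, (LinearMap.toContinuousLinearMap (Matrix.toLin' K)).lipschitz.comp
    lipschitzWith_one_abs_pi⟩

theorem surjective_add_smul_mulVec_abs_of_dist_lt {C L : ℝ≥0} {t s : ℝ}
    (hC : AntilipschitzWith C fun y : ι → ℝ => y + t • (K *ᵥ |y|))
    (hL : LipschitzWith L fun y : ι → ℝ => K *ᵥ |y|) (hst : C * L * dist s t < 1)
    (hsurj : Function.Surjective fun y : ι → ℝ => y + t • (K *ᵥ |y|)) :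
    Function.Surjective fun y : ι → ℝ => y + s • (K *ᵥ |y|) := by
  have hsplit : (fun y : ι → ℝ => y + s • (K *ᵥ |y|)) =
      (fun y => y + t • (K *ᵥ |y|)) + fun y => (s - t) • (K *ᵥ |y|) := by
    ext y : 1
    simp only [Pi.add_apply, sub_smul]
    abel
  rw [hsplit]
  refine hC.surjective_add_of_lipschitzWith hsurj ((lipschitzWith_smul (s - t)).comp hL) ?_
  rw [← NNReal.coe_lt_coe]
  push_cast
  rw [← dist_eq_norm]
  linarith

theorem bijective_add_mulVec_abs
    (hK : ∀ d : ι → ℝ, ‖d‖ ≤ 1 → ∀ x, x + K *ᵥ (d * x) = 0 → x = 0) :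
    Function.Bijective fun y : ι → ℝ => y + K *ᵥ |y| := by
  obtain ⟨C, hC⟩ := exists_antilipschitzWith_add_smul_mulVec_abs K hK
  obtain ⟨L, hL⟩ := exists_lipschitzWith_mulVec_abs K
  set δ : ℝ := (C * L + 1 : ℝ)⁻¹
  have hδ : 0 < δ := by positivity
  have step : ∀ t s : ℝ, |t| ≤ 1 → dist s t < δ →
      Function.Surjective (fun y : ι → ℝ => y + t • (K *ᵥ |y|)) →
      Function.Surjective (fun y : ι → ℝ => y + s • (K *ᵥ |y|)) := by
    refine fun t s ht hst => surjective_add_smul_mulVec_abs_of_dist_lt K (hC t ht) hL ?_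
    calc (C : ℝ) * L * dist s t ≤ C * L * δ := by gcongr
      _ < 1 := by rw [mul_inv_lt_iff₀ (by positivity)]; linarith
  have hsurj := (convex_closedBall (0 : ℝ) 1).isPreconnected.induction₂'
    (fun t s => Function.Surjective (fun y : ι → ℝ => y + t • (K *ᵥ |y|)) →
      Function.Surjective (fun y : ι → ℝ => y + s • (K *ᵥ |y|)))
    (fun t ht => by
      filter_upwards [self_mem_nhdsWithin, nhdsWithin_le_nhds (Metric.ball_mem_nhds t hδ)]
        with s hs hst
      rw [mem_closedBall_zero_iff, Real.norm_eq_abs] at ht hs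
      exact ⟨step t s ht hst, step s t hs (Metric.mem_ball'.1 hst)⟩)
    (fun _ _ _ _ _ _ h₁ h₂ => h₂ ∘ h₁) (Metric.mem_closedBall_self zero_le_one)
    (x := 0) (y := 1) (by simp) (fun y => ⟨y, by simp⟩)
  have hinj := (hC 1 (by simp)).injective
  simp only [one_smul] at hsurj hinj
  exact ⟨hinj, hsurj⟩

end AbsoluteValueEquation

theorem vec_add_mul_matAbs {n : ℕ} (M Y : Matrix (Fin n) (Fin n) ℝ) :
    vec (Y + M * matAbs Y) = vec Y + (1 ⊗ₖ M) *ᵥ |vec Y| := by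
  rw [vec_add, vec_mul_eq_mulVec]
  rfl

theorem bijective_add_mul_matAbs {n : ℕ} (M : Matrix (Fin n) (Fin n) ℝ)
    (hM : ∀ d : Fin n × Fin n → ℝ, ‖d‖ ≤ 1 → specRad ((1 ⊗ₖ M) * diagonal d) < 1) :
    Function.Bijective fun Y : Matrix (Fin n) (Fin n) ℝ => Y + M * matAbs Y := by
  rw [← vec_bijective.of_comp_iff']
  have hconj : (vec ∘ fun Y => Y + M * matAbs Y) = (fun y => y + (1 ⊗ₖ M) *ᵥ |y|) ∘ vec :=
    funext (vec_add_mul_matAbs M)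
  rw [hconj]
  exact (bijective_add_mulVec_abs _ fun d hd _ hx =>
    eq_zero_of_add_mulVec_mul_eq_zero_of_specRad_lt_one (hM d hd) hx).comp vec_bijective

/-- If A, C are invertible and ρ((I ⊗ (CA⁻¹B))D) < 1 for every diagonal matrix D
with diagonal entries in [−1, 1], then for every F the NGAVME AX + B|CX| = F has
exactly one solution. -/
theorem ngavme_unique_of_specRad_diag {n : ℕ} (A B C : Matrix (Fin n) (Fin n) ℝ)
    (hA : IsUnit A) (hC : IsUnit C)
    (h : ∀ d : Fin n × Fin n → ℝ, (∀ i, d i ∈ Set.Icc (-1 : ℝ) 1) →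
      specRad (((1 : Matrix (Fin n) (Fin n) ℝ) ⊗ₖ (C * A⁻¹ * B)) * Matrix.diagonal d) < 1) :
    ∀ F : Matrix (Fin n) (Fin n) ℝ,
      ∃! X : Matrix (Fin n) (Fin n) ℝ, A * X + B * matAbs (C * X) = F := by
  have hM : ∀ d : Fin n × Fin n → ℝ, ‖d‖ ≤ 1 →
      specRad ((1 ⊗ₖ (C * A⁻¹ * B)) * diagonal d) < 1 := fun d hd =>
    h d fun i => abs_le.1 (by simpa using (norm_le_pi_norm d i).trans hd)
  have hAC : IsUnit (A * C⁻¹) := hA.mul (isUnit_nonsing_inv_iff.2 hC)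
  have hfactor : (fun X => A * X + B * matAbs (C * X)) =
      (A * C⁻¹ * ·) ∘ (fun Y => Y + C * A⁻¹ * B * matAbs Y) ∘ (C * ·) := by
    ext X : 1
    have hAd := (isUnit_iff_isUnit_det A).1 hA
    have hCd := (isUnit_iff_isUnit_det C).1 hC
    simp only [Function.comp_apply, mul_add, Matrix.mul_assoc,
      nonsing_inv_mul_cancel_left _ _ hCd, mul_nonsing_inv_cancel_left _ _ hAd]
  have hbij : Function.Bijective fun X => A * X + B * matAbs (C * X) := by
    rw [hfactor]
    exact IsUnit.isUnit_iff_mulLeft_bijective.1 hAC |>.comp <|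
      (bijective_add_mul_matAbs _ hM).comp <| IsUnit.isUnit_iff_mulLeft_bijective.1 hC
  exact hbij.existsUnique
end

section
/- Let A, B, C ∈ ℝ^{n×n} with A invertible. If the spectral radius ρ(|CA⁻¹B|) < 1, then for every F ∈ ℝ^{n×n} the new generalized absolute value matrix equation AX + B|CX| = F has exactly one solution X ∈ ℝ^{n×n}. -/
open Matrix

/-!
Substituting `Y = C X` turns the equation into the fixed-point problem
`Y = C A⁻¹ F - N |Y|` with `N = C A⁻¹ B`, whose solutions correspond bijectively to those of the
original equation via `X = A⁻¹ (F - B |Y|)`. The map `T Y = C A⁻¹ F - N |Y|` satisfies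
`|T Y₁ - T Y₂| ≤ |N| |Y₁ - Y₂|` entrywise, hence `|Tᵏ Y₁ - Tᵏ Y₂| ≤ |N|ᵏ |Y₁ - Y₂|`. By Gelfand's
formula, `ρ(|N|) < 1` gives some `k` with `‖|N|ᵏ‖_∞ < 1`, so `Tᵏ` is a contraction for the
`∞`-operator norm and `T` has a unique fixed point.
-/

open Function Filter

theorem Function.existsUnique_isFixedPt_comp_comm {α β : Type*} {f : α → β} {g : β → α}
    (h : ∃! y, IsFixedPt (f ∘ g) y) : ∃! x, IsFixedPt (g ∘ f) x := by
  obtain ⟨y, hy, hy_unique⟩ := h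
  refine ⟨g y, congrArg g hy, fun x hx => ?_⟩
  have hfx : IsFixedPt (f ∘ g) (f x) := congrArg f hx
  rw [← hx, comp_apply, hy_unique _ hfx]

theorem spectrum.exists_nnnorm_pow_lt_one_of_spectralRadius_lt_one {A : Type*} [NormedRing A]
    [NormedAlgebra ℂ A] [CompleteSpace A] {a : A} (ha : spectralRadius ℂ a < 1) :
    ∃ k, ‖a ^ k‖₊ < 1 := by
  obtain ⟨k, hk_root, hk_pos⟩ :=
    (((pow_nnnorm_pow_one_div_tendsto_nhds_spectralRadius a).eventually_lt_const ha).and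
      (eventually_gt_atTop 0)).exists
  refine ⟨k, not_le.mp fun h_one => hk_root.not_ge ?_⟩
  exact ENNReal.one_le_rpow (by exact_mod_cast h_one) (by positivity)

namespace Matrix

variable {m n : Type*} [Fintype m]

theorem spectralRadius_map_ofReal_le_specRad [DecidableEq m] (M : Matrix m m ℝ) :
    spectralRadius ℂ (M.map Complex.ofReal) ≤ ENNReal.ofReal (specRad M) := by
  have hbdd : BddAbove ((fun z : ℂ => ‖z‖) '' spectrum ℂ (M.map Complex.ofReal)) :=
    ((finite_spectrum _).image _).bddAbove
  refine iSup₂_le fun z hz => ?_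
  rw [← ENNReal.ofReal_coe_nnreal, coe_nnnorm]
  exact ENNReal.ofReal_le_ofReal (le_csSup hbdd ⟨z, hz, rfl⟩)

theorem mul_add_eq_iff_inv_mul_sub_eq {α : Type*} [CommRing α] [DecidableEq m]
    {A : Matrix m m α} (hA : IsUnit A) (X Z F : Matrix m n α) :
    A * X + Z = F ↔ A⁻¹ * (F - Z) = X := by
  have : Invertible A := hA.invertible
  rw [← eq_sub_iff_add_eq, inv_mul_eq_iff_eq_mul_of_invertible, eq_comm]

section LinftyOpNorm

attribute [local instance] Matrix.linftyOpSeminormedAddCommGroup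

theorem linfty_opNorm_le_of_norm_le [Fintype n] {α β : Type*} [SeminormedAddCommGroup α]
    [SeminormedAddCommGroup β] {A : Matrix m n α} {B : Matrix m n β}
    (h : ∀ i j, ‖A i j‖ ≤ ‖B i j‖) : ‖A‖ ≤ ‖B‖ := by
  rw [linfty_opNorm_def, linfty_opNorm_def, NNReal.coe_le_coe]
  exact Finset.sup_mono_fun fun i _ => Finset.sum_le_sum fun j _ => h i j

attribute [local instance] Matrix.linftyOpNormedRing Matrix.linftyOpNormedAlgebra in
theorem exists_pow_norm_lt_one_of_specRad_lt_one [DecidableEq m] {M : Matrix m m ℝ}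
    (h : specRad M < 1) : ∃ k, ‖M ^ k‖ < 1 := by
  have hρ : spectralRadius ℂ (M.map Complex.ofReal) < 1 :=
    (spectralRadius_map_ofReal_le_specRad M).trans_lt (ENNReal.ofReal_lt_one.mpr h)
  obtain ⟨k, hk⟩ := spectrum.exists_nnnorm_pow_lt_one_of_spectralRadius_lt_one hρ
  refine ⟨k, (linfty_opNorm_le_of_norm_le fun i j => ?_).trans_lt hk⟩
  rw [show M.map Complex.ofReal ^ k = (M ^ k).map Complex.ofReal from
    (M.map_pow Complex.ofRealHom k).symm, map_apply, Complex.norm_real]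

end LinftyOpNorm

/-- Lipschitz continuity for the entrywise matrix-valued distance `(Y₁, Y₂) ↦ |Y₁ - Y₂|`, with a
matrix Lipschitz constant `P`, as in Perov's fixed-point theorem. -/
def EntrywiseLipschitzWith (P : Matrix m m ℝ) (f : Matrix m n ℝ → Matrix m n ℝ) : Prop :=
  ∀ Y₁ Y₂ i j, |f Y₁ i j - f Y₂ i j| ≤ (P * (Y₁ - Y₂).map abs) i j

theorem entrywiseLipschitzWith_sub_mul_map_abs (G : Matrix m n ℝ) (N : Matrix m m ℝ) :
    EntrywiseLipschitzWith (N.map abs) fun Y => G - N * Y.map abs := fun Y₁ Y₂ i j => by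
  simp only [sub_apply, sub_sub_sub_cancel_left, mul_apply, map_apply, ← Finset.sum_sub_distrib,
    ← mul_sub]
  refine (Finset.abs_sum_le_sum_abs _ _).trans (Finset.sum_le_sum fun l _ => ?_)
  rw [abs_mul, abs_sub_comm]
  exact mul_le_mul_of_nonneg_left (abs_abs_sub_abs_le_abs_sub _ _) (abs_nonneg _)

namespace EntrywiseLipschitzWith

variable {P Q : Matrix m m ℝ} {f g : Matrix m n ℝ → Matrix m n ℝ}

theorem id [DecidableEq m] :
    EntrywiseLipschitzWith (1 : Matrix m m ℝ) (id : Matrix m n ℝ → Matrix m n ℝ) :=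
  fun Y₁ Y₂ i j => by simp

theorem comp (hf : EntrywiseLipschitzWith P f) (hg : EntrywiseLipschitzWith Q g)
    (hP : ∀ i j, 0 ≤ P i j) : EntrywiseLipschitzWith (P * Q) (f ∘ g) := fun Y₁ Y₂ i j =>
  calc |f (g Y₁) i j - f (g Y₂) i j| ≤ (P * (g Y₁ - g Y₂).map abs) i j := hf _ _ i j
    _ ≤ (P * (Q * (Y₁ - Y₂).map abs)) i j :=
      Finset.sum_le_sum fun l _ => mul_le_mul_of_nonneg_left
        (by simpa only [map_apply, sub_apply] using hg Y₁ Y₂ l j) (hP i l)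
    _ = (P * Q * (Y₁ - Y₂).map abs) i j := by rw [Matrix.mul_assoc]

theorem iterate [DecidableEq m] (hf : EntrywiseLipschitzWith P f) (hP : ∀ i j, 0 ≤ P i j)
    (k : ℕ) : EntrywiseLipschitzWith (P ^ k) f^[k] := by
  induction k with
  | zero => exact EntrywiseLipschitzWith.id
  | succ k ih => rw [pow_succ, iterate_succ]; exact ih.comp hf (pow_apply_nonneg hP k)

section LinftyOpNorm

attribute [local instance] Matrix.linftyOpNormedAddCommGroup Matrix.linftyOpNormedSpace

theorem lipschitzWith [Fintype n] (hf : EntrywiseLipschitzWith P f) : LipschitzWith ‖P‖₊ f := by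
  refine LipschitzWith.of_dist_le_mul fun Y₁ Y₂ => ?_
  rw [dist_eq_norm, dist_eq_norm, coe_nnnorm]
  calc ‖f Y₁ - f Y₂‖ ≤ ‖P * (Y₁ - Y₂).map abs‖ :=
        linfty_opNorm_le_of_norm_le fun i j => (hf Y₁ Y₂ i j).trans (le_abs_self _)
    _ ≤ ‖P‖ * ‖(Y₁ - Y₂).map abs‖ := linfty_opNorm_mul _ _
    _ ≤ ‖P‖ * ‖Y₁ - Y₂‖ := by
      gcongr
      exact linfty_opNorm_le_of_norm_le fun i j => by simp

/-- Perov's fixed-point theorem, with `P ^ k → 0` witnessed by a single power of norm `< 1`. -/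
theorem existsUnique_isFixedPt [Fintype n] [DecidableEq m] (hf : EntrywiseLipschitzWith P f)
    (hP : ∀ i j, 0 ≤ P i j) {k : ℕ} (hk : ‖P ^ k‖ < 1) : ∃! Y, IsFixedPt f Y := by
  have hcontr : ContractingWith ‖P ^ k‖₊ f^[k] := ⟨hk, (hf.iterate hP k).lipschitzWith⟩
  refine ⟨_, hcontr.isFixedPt_fixedPoint_iterate, fun Y (hY : IsFixedPt f Y) => ?_⟩
  exact hcontr.fixedPoint_unique (hY.iterate k)

end LinftyOpNorm

end EntrywiseLipschitzWith

end Matrix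

/-- If A is invertible and ρ(|CA⁻¹B|) < 1, then for every F the NGAVME
AX + B|CX| = F has exactly one solution. -/
theorem ngavme_unique_of_specRad {n : ℕ} (A B C : Matrix (Fin n) (Fin n) ℝ)
    (hA : IsUnit A) (h : specRad (matAbs (C * A⁻¹ * B)) < 1) :
    ∀ F : Matrix (Fin n) (Fin n) ℝ,
      ∃! X : Matrix (Fin n) (Fin n) ℝ, A * X + B * matAbs (C * X) = F := by
  intro F
  simp_rw [mul_add_eq_iff_inv_mul_sub_eq hA]
  refine existsUnique_isFixedPt_comp_comm (f := (C * ·))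
    (g := fun Y => A⁻¹ * (F - B * matAbs Y)) ?_
  have hT : (C * ·) ∘ (fun Y => A⁻¹ * (F - B * matAbs Y)) =
      fun Y => C * A⁻¹ * F - C * A⁻¹ * B * Y.map abs := by
    funext Y
    simp only [Function.comp_apply, Matrix.mul_sub, Matrix.mul_assoc]
    rfl
  obtain ⟨k, hk⟩ := exists_pow_norm_lt_one_of_specRad_lt_one h
  rw [hT]
  exact (entrywiseLipschitzWith_sub_mul_map_abs _ _).existsUnique_isFixedPt
    (fun _ _ => abs_nonneg _) hk
end

section
/- Let A, B, C ∈ ℝ^{n×n} with B and C invertible. If σ_min(B⁻¹AC⁻¹) > 1, then for every F ∈ ℝ^{n×n} the new generalized absolute value matrix equation AX + B|CX| = F has exactly one solution X ∈ ℝ^{n×n}. -/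
open Matrix

/-!
Put `Y = C X` and `M = B⁻¹ A C⁻¹`: multiplying by `B⁻¹` turns the equation into `M Y + |Y| = B⁻¹ F`,
which decouples into the columns of `Y`. On a column, `‖M y‖ ≥ σ_min(M) ‖y‖` in the Euclidean norm
while `y ↦ |y|` is `1`-Lipschitz, so `y ↦ M y + |y|` is a perturbation of the invertible map `M`
by a Lipschitz map whose constant `1` is below `σ_min(M)`; such a perturbation is still a bijection,
as `y ↦ M⁻¹ (g - |y|)` is a contraction.
-/

open Function
open scoped NNReal MatrixOrder

theorem ContinuousLinearEquiv.bijective_add_of_lipschitzWith {𝕜 E F : Type*}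
    [NontriviallyNormedField 𝕜] [NormedAddCommGroup E] [NormedSpace 𝕜 E] [CompleteSpace E]
    [NormedAddCommGroup F] [NormedSpace 𝕜 F] (L : E ≃L[𝕜] F) {φ : E → F} {s : ℝ} {K : ℝ≥0}
    (hL : ∀ x, s * ‖x‖ ≤ ‖L x‖) (hφ : LipschitzWith K φ) (hK : K < s) :
    Bijective fun x => L x + φ x := by
  have happrox : ApproximatesLinearOn (fun x => L x + φ x) (L : E →L[𝕜] F) Set.univ K := by
    rw [ApproximatesLinearOn.approximatesLinearOn_iff_lipschitzOnWith]
    simpa [Pi.sub_def] using hφ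
  have hc : Subsingleton E ∨ K < ‖(L.symm : F →L[𝕜] E)‖₊⁻¹ := by
    refine L.subsingleton_or_nnnorm_symm_pos.imp id fun hpos => ?_
    have hs : 0 < s := K.coe_nonneg.trans_lt hK
    have hsymm : ‖(L.symm : F →L[𝕜] E)‖ ≤ s⁻¹ :=
      ContinuousLinearMap.opNorm_le_bound _ (inv_nonneg.2 hs.le) fun y => by
        rw [inv_mul_eq_div, le_div_iff₀' hs]
        simpa using hL (L.symm y)
    rw [← NNReal.coe_lt_coe, NNReal.coe_inv, coe_nnnorm]
    exact hK.trans_le (le_inv_of_le_inv₀ hpos hsymm)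
  exact ⟨Set.injOn_univ.1 (happrox.injOn hc), happrox.surjective hc⟩

theorem EuclideanSpace.lipschitzWith_abs {ι : Type*} [Fintype ι] :
    LipschitzWith 1 fun x : EuclideanSpace ℝ ι => WithLp.toLp 2 |x.ofLp| :=
  LipschitzWith.of_dist_le_mul fun x y => by
    rw [NNReal.coe_one, one_mul, EuclideanSpace.dist_eq, EuclideanSpace.dist_eq]
    gcongr with i
    simpa only [Real.dist_eq, Pi.abs_apply] using abs_abs_sub_abs_le_abs_sub (x i) (y i)

theorem Matrix.transpose_bijective {m n α : Type*} :
    Bijective (transpose : Matrix m n α → Matrix n m α) :=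
  ⟨transpose_injective, fun X => ⟨Xᵀ, transpose_transpose X⟩⟩

theorem Matrix.bijective_of_transpose_apply_eq {m n α : Type*} {Φ : Matrix m n α → Matrix m n α}
    {φ : (m → α) → m → α} (hΦ : ∀ X j, (Φ X)ᵀ j = φ (Xᵀ j)) (hφ : Bijective φ) :
    Bijective Φ := by
  have hfactor : Φ = transpose ∘ Pi.map (fun _ => φ) ∘ transpose := by
    funext X
    rw [← transpose_transpose (Φ X)]
    exact congrArg transpose (funext (hΦ X))
  rw [hfactor]
  exact transpose_bijective.comp ((Bijective.piMap fun _ => hφ).comp transpose_bijective)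

theorem Matrix.sInf_spectrum_transpose_mul_self_mul_dotProduct_le {m : Type*} [Fintype m]
    [DecidableEq m] (M : Matrix m m ℝ) (x : m → ℝ) :
    sInf (spectrum ℝ (Mᵀ * M)) * (x ⬝ᵥ x) ≤ (M *ᵥ x) ⬝ᵥ (M *ᵥ x) := by
  have hsa : IsSelfAdjoint (Mᵀ * M) := (posSemidef_conjTranspose_mul_self M).isHermitian
  have hle : algebraMap ℝ _ (sInf (spectrum ℝ (Mᵀ * M))) ≤ Mᵀ * M :=
    (algebraMap_le_iff_le_spectrum hsa).2 fun μ hμ =>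
      csInf_le (finite_real_spectrum (A := Mᵀ * M)).bddBelow hμ
  have := (le_iff.1 hle).dotProduct_mulVec_nonneg x
  rwa [Algebra.algebraMap_eq_smul_one, sub_mulVec, ← mulVec_mulVec, smul_mulVec, one_mulVec,
    dotProduct_sub, dotProduct_smul, smul_eq_mul, sub_nonneg, dotProduct_mulVec,
    vecMul_transpose] at this

theorem sigmaMin_mul_norm_le_norm_toEuclideanCLM {n : ℕ} (M : Matrix (Fin n) (Fin n) ℝ)
    (x : EuclideanSpace ℝ (Fin n)) : sigmaMin M * ‖x‖ ≤ ‖toEuclideanCLM (𝕜 := ℝ) M x‖ := by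
  have hsq : ∀ y : EuclideanSpace ℝ (Fin n), ‖y‖ ^ 2 = y.ofLp ⬝ᵥ y.ofLp := fun y => by
    rw [← real_inner_self_eq_norm_sq, EuclideanSpace.inner_eq_star_dotProduct]
    rfl
  have key := M.sInf_spectrum_transpose_mul_self_mul_dotProduct_le x.ofLp
  rw [← hsq, ← ofLp_toEuclideanCLM, ← hsq] at key
  calc sigmaMin M * ‖x‖ = √(sInf (spectrum ℝ (Mᵀ * M)) * ‖x‖ ^ 2) := by
        rw [sigmaMin, Real.sqrt_mul' _ (sq_nonneg _), Real.sqrt_sq (norm_nonneg _)]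
    _ ≤ √(‖toEuclideanCLM (𝕜 := ℝ) M x‖ ^ 2) := Real.sqrt_le_sqrt key
    _ = ‖toEuclideanCLM (𝕜 := ℝ) M x‖ := Real.sqrt_sq (norm_nonneg _)

theorem Matrix.bijective_mulVec_add_abs_of_one_lt_sigmaMin {n : ℕ} {M : Matrix (Fin n) (Fin n) ℝ}
    (h : 1 < sigmaMin M) : Bijective fun y : Fin n → ℝ => M *ᵥ y + |y| := by
  have hinj : Injective (toEuclideanCLM (𝕜 := ℝ) M) := by
    refine (injective_iff_map_eq_zero _).2 fun x hx => norm_eq_zero.1 ?_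
    have := sigmaMin_mul_norm_le_norm_toEuclideanCLM M x
    rw [hx, norm_zero] at this
    exact le_antisymm (nonpos_of_mul_nonpos_right this (zero_lt_one.trans h)) (norm_nonneg x)
  let L := (LinearEquiv.ofInjectiveEndo
    (toEuclideanCLM (𝕜 := ℝ) M : EuclideanSpace ℝ (Fin n) →ₗ[ℝ] _) hinj).toContinuousLinearEquiv
  have hψ := L.bijective_add_of_lipschitzWith (sigmaMin_mul_norm_le_norm_toEuclideanCLM M)
    EuclideanSpace.lipschitzWith_abs (by simpa using h)
  exact ((WithLp.equiv 2 _).bijective.comp hψ).comp (WithLp.equiv 2 _).symm.bijective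

/-- If B and C are invertible and σ_min(B⁻¹AC⁻¹) > 1, then for every F the NGAVME
AX + B|CX| = F has exactly one solution. -/
theorem ngavme_unique_of_sigmaMin {n : ℕ} (A B C : Matrix (Fin n) (Fin n) ℝ)
    (hB : IsUnit B) (hC : IsUnit C) (h : 1 < sigmaMin (B⁻¹ * A * C⁻¹)) :
    ∀ F : Matrix (Fin n) (Fin n) ℝ,
      ∃! X : Matrix (Fin n) (Fin n) ℝ, A * X + B * matAbs (C * X) = F := by
  refine (bijective_iff_existsUnique _).1 ?_
  set M := B⁻¹ * A * C⁻¹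
  have hreduced : Bijective fun Y => M * Y + matAbs Y :=
    bijective_of_transpose_apply_eq
      (fun Y j => by ext i; simp [mul_apply, mulVec, dotProduct, matAbs])
      (bijective_mulVec_add_abs_of_one_lt_sigmaMin h)
  have hfactor : (fun X => A * X + B * matAbs (C * X)) =
      (B * ·) ∘ (fun Y => M * Y + matAbs Y) ∘ (C * ·) := by
    funext X
    simp only [Function.comp_apply, M, Matrix.mul_add, ← Matrix.mul_assoc,
      mul_nonsing_inv B ((isUnit_iff_isUnit_det B).1 hB), Matrix.one_mul,
      nonsing_inv_mul_cancel_right C _ ((isUnit_iff_isUnit_det C).1 hC)]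
  rw [hfactor]
  exact (IsUnit.isUnit_iff_mulLeft_bijective.1 hB).comp
    (hreduced.comp (IsUnit.isUnit_iff_mulLeft_bijective.1 hC))
end

section
/- The real scalar equation x + 2|x| = 1 has exactly two solutions, namely x = 1/3 and x = −1, and the equation x + 2|x| = −1 has no real solution; consequently, with n = 1, A = K = L = 1 and B = 2, the condition σ_min(LK⁻¹)·σ_min(A⁻¹B) > 1 holds (the product equals 2) yet the Sylvester-like absolute value equation AXK + B|X|L = F fails to have a unique solution for every F. -/
open Matrix

lemma sigmaMin_one : sigmaMin (1 : Matrix (Fin 1) (Fin 1) ℝ) = 1 := by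
  unfold sigmaMin
  rw [transpose_one, one_mul, show (1 : Matrix (Fin 1) (Fin 1) ℝ) = algebraMap ℝ _ 1 by simp,
    spectrum.scalar_eq, csInf_singleton, Real.sqrt_one]

lemma sigmaMin_two : sigmaMin (2 : Matrix (Fin 1) (Fin 1) ℝ) = 2 := by
  unfold sigmaMin
  have h2 : (2 : Matrix (Fin 1) (Fin 1) ℝ)ᵀ = 2 := by
    ext i j; rw [Matrix.transpose_apply, Subsingleton.elim i j]
  rw [h2, show (2 : Matrix (Fin 1) (Fin 1) ℝ) * 2 = algebraMap ℝ _ 4 by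
      rw [map_ofNat]; norm_num,
    spectrum.scalar_eq, csInf_singleton,
    show (4:ℝ) = 2^2 by norm_num, Real.sqrt_sq (by norm_num)]

lemma no_sol : ¬ ∃ x : ℝ, x + 2 * |x| = -1 := by
  rintro ⟨x, hx⟩
  rcases le_or_gt 0 x with h | h
  · rw [abs_of_nonneg h] at hx; linarith
  · rw [abs_of_neg h] at hx; linarith

/-- x + 2|x| = 1 has exactly the two solutions 1/3 and −1, x + 2|x| = −1 has no
solution; hence for n = 1, A = K = L = 1, B = 2 the condition
σ_min(LK⁻¹)·σ_min(A⁻¹B) > 1 holds (the product equals 2), yet the Sylvester-like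
AVE AXK + B|X|L = F does not have a unique solution for every F. -/
theorem wang_counterexample :
    ({x : ℝ | x + 2 * |x| = 1} = {1/3, -1}) ∧
    (¬ ∃ x : ℝ, x + 2 * |x| = -1) ∧
    (sigmaMin ((1 : Matrix (Fin 1) (Fin 1) ℝ) * (1 : Matrix (Fin 1) (Fin 1) ℝ)⁻¹) *
        sigmaMin ((1 : Matrix (Fin 1) (Fin 1) ℝ)⁻¹ * (2 : Matrix (Fin 1) (Fin 1) ℝ)) = 2) ∧
    (1 < sigmaMin ((1 : Matrix (Fin 1) (Fin 1) ℝ) * (1 : Matrix (Fin 1) (Fin 1) ℝ)⁻¹) *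
        sigmaMin ((1 : Matrix (Fin 1) (Fin 1) ℝ)⁻¹ * (2 : Matrix (Fin 1) (Fin 1) ℝ))) ∧
    ¬ (∀ F : Matrix (Fin 1) (Fin 1) ℝ,
        ∃! X : Matrix (Fin 1) (Fin 1) ℝ,
          (1 : Matrix (Fin 1) (Fin 1) ℝ) * X * 1 + 2 * matAbs X * 1 = F) := by
  have hσ : sigmaMin ((1 : Matrix (Fin 1) (Fin 1) ℝ) * (1 : Matrix (Fin 1) (Fin 1) ℝ)⁻¹) *
      sigmaMin ((1 : Matrix (Fin 1) (Fin 1) ℝ)⁻¹ * (2 : Matrix (Fin 1) (Fin 1) ℝ)) = 2 := by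
    rw [inv_one, one_mul, one_mul, sigmaMin_one, sigmaMin_two, one_mul]
  refine ⟨?_, no_sol, hσ, by rw [hσ]; norm_num, ?_⟩
  · ext x
    simp only [Set.mem_setOf_eq, Set.mem_insert_iff, Set.mem_singleton_iff]
    constructor
    · intro hx
      rcases le_or_gt 0 x with h | h
      · rw [abs_of_nonneg h] at hx; left; linarith
      · rw [abs_of_neg h] at hx; right; linarith
    · rintro (rfl | rfl)
      · rw [show |(1/3:ℝ)| = 1/3 from abs_of_pos (by norm_num)]; norm_num
      · norm_num
  · intro hall
    obtain ⟨X, hX, -⟩ := hall (-1)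
    have := congrFun (congrFun hX 0) 0
    simp only [Matrix.mul_apply, Matrix.add_apply, Fin.sum_univ_one, Matrix.one_apply_eq,
      Matrix.neg_apply, matAbs] at this
    apply no_sol
    refine ⟨X 0 0, ?_⟩
    have h2 : (2 : Matrix (Fin 1) (Fin 1) ℝ) 0 0 = 2 := rfl
    rw [h2] at this
    linarith [this]
end
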